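/- arXiv:2212.06753 — 6 statements merged into one kernel-verified Lean document; each statement's English description precedes it below -/
import Mathlib

section
/- Let p_1, …, p_n be distinct prime numbers and let (X, r) be an indecomposable multipermutation involutive non-degenerate set-theoretic solution of the Yang–Baxter equation of cardinality p_1⋯p_n. Consider the natural left brace structure on 𝒢(X,r) and let P_i be the Sylow p_i-subgroup of its additive group, for i = 1, …, n. Then: every prime dividing |𝒢(X,r)| belongs to {p_1, …, p_n}; 𝒢(X,r) = P_1P_2⋯P_n (product taken in the multiplicative group); and each P_i is an elementary abelian p_i-group on which the two operations of the brace coincide (so P_i is a trivial brace and a Sylow p_i-subgroup of the multiplicative group 𝒢(X,r)). -/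
open Equiv Pointwise

universe u v

/-- An involutive non-degenerate set-theoretic solution of the Yang–Baxter equation on `X`,
presented by its family of bijections `σ x` (`x ∈ X`), subject to the condition
`σ_x ∘ σ_{σ_x⁻¹(y)} = σ_y ∘ σ_{σ_y⁻¹(x)}`; the solution itself is recovered as
`r (x, y) = (σ x y, (σ (σ x y))⁻¹ x)`. -/
structure YBE (X : Type u) where
  σ : X → Equiv.Perm X
  ybe : ∀ x y : X, σ x * σ ((σ x)⁻¹ y) = σ y * σ ((σ y)⁻¹ x)

namespace YBE

variable {X : Type u} {Y : Type v}

/-- The permutation group `𝒢(X,r)` of a solution. -/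
def permGroup (S : YBE X) : Subgroup (Equiv.Perm X) :=
  Subgroup.closure (Set.range S.σ)

/-- `(X,r)` is indecomposable if `𝒢(X,r)` acts transitively on `X`. -/
def Indecomposable (S : YBE X) : Prop :=
  ∀ x y : X, ∃ g ∈ S.permGroup, g x = y

/-- Homomorphism of solutions. -/
def IsHom (S : YBE X) (T : YBE Y) (f : X → Y) : Prop :=
  ∀ x y : X, f (S.σ x y) = T.σ (f x) (f y)

/-- `T` is (a copy of) the retract `Ret(X,r)` of `S`: there is a surjective homomorphism
of solutions identifying points with equal `σ`'s, and only those. -/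
def IsRetract (S : YBE X) (T : YBE Y) : Prop :=
  ∃ f : X → Y, Function.Surjective f ∧ S.IsHom T f ∧
    ∀ x x' : X, f x = f x' ↔ S.σ x = S.σ x'

/-- `Retⁿ(X,r)` has cardinality one, i.e. the multipermutation level is at most `n`. -/
def MPLevelLE : ℕ → (X : Type u) → YBE X → Prop
  | 0, X, _ => Nonempty X ∧ Subsingleton X
  | n + 1, _, S => ∃ (Z : Type u) (T : YBE Z), S.IsRetract T ∧ MPLevelLE n Z T

/-- `(X,r)` is a multipermutation solution: `Retⁿ(X,r)` has cardinality one
for some positive integer `n`. -/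
def IsMultipermutation (S : YBE X) : Prop :=
  ∃ n : ℕ, 0 < n ∧ MPLevelLE n X S

/-- `m` is the multipermutation level of `(X,r)`: it is the least positive integer
with `|Retᵐ(X,r)| = 1`. -/
def MPLevelExact (S : YBE X) (m : ℕ) : Prop :=
  0 < m ∧ MPLevelLE m X S ∧ ∀ k : ℕ, 0 < k → MPLevelLE k X S → m ≤ k

/-- A simple solution: `|X| > 1` and every epimorphic image is either an isomorphic copy
or a singleton. -/
def IsSimple (S : YBE X) : Prop :=
  1 < Nat.card X ∧ ∀ (Z : Type u) (T : YBE Z) (f : X → Z),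
    S.IsHom T f → Function.Surjective f → (Function.Bijective f ∨ Nat.card Z = 1)

end YBE

/-- The orbit `H(x) = {t(x) : t ∈ H}` of `x ∈ X` under a subgroup `H` of a permutation
group `G ≤ Sym(X)`. -/
def orbIn {X : Type u} {G : Subgroup (Equiv.Perm X)} (H : Subgroup ↥G) (x : X) : Set X :=
  {y | ∃ t : ↥G, t ∈ H ∧ (t : Equiv.Perm X) x = y}

/-- The "orbit" `A(x) = {t(x) : t ∈ A}` of `x ∈ X` under a subset `A` of a permutation
group `G ≤ Sym(X)`. -/
def orbSet {X : Type u} {G : Subgroup (Equiv.Perm X)} (A : Set ↥G) (x : X) : Set X :=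
  {y | ∃ t ∈ A, ((t : Equiv.Perm X)) x = y}

/-- A left-brace structure on a group `G`: an abelian group operation `add` (whose neutral
element is `1`) satisfying the brace compatibility `a∘(b+c) + a = a∘b + a∘c`, where `∘` is the
given group operation of `G`.  In other words, this makes `G` a left brace whose
multiplicative group is `G`. -/
structure BraceOps (G : Type*) [Group G] where
  add : G → G → G
  neg : G → G
  add_assoc : ∀ a b c, add (add a b) c = add a (add b c)
  add_comm : ∀ a b, add a b = add b a
  zero_add : ∀ a, add 1 a = a
  neg_add_cancel : ∀ a, add (neg a) a = 1
  compat : ∀ a b c, add (a * add b c) a = add (a * b) (a * c)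

namespace BraceOps

variable {G : Type*} [Group G]

/-- The lambda map `λ_a(b) = -a + a∘b` of a left brace. -/
def lam (β : BraceOps G) (a b : G) : G :=
  β.add (β.neg a) (a * b)

/-- Natural multiples with respect to the additive structure of the brace. -/
def nsmul (β : BraceOps G) : ℕ → G → G
  | 0, _ => 1
  | n + 1, a => β.add a (β.nsmul n a)

/-- The socle `Soc(B) = {a : a∘b = a + b for all b}` of a left brace. -/
def socle (β : BraceOps G) : Set G :=
  {a | ∀ b : G, a * b = β.add a b}

/-- The Sylow `q`-subgroup (i.e. the `q`-primary component) of the additive group of a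
finite left brace. -/
def addSylow (β : BraceOps G) (q : ℕ) : Set G :=
  {a | ∃ k : ℕ, β.nsmul (q ^ k) a = 1}

/-- `A` is a subgroup of the additive group of the brace. -/
def IsAddSubgroup (β : BraceOps G) (A : Set G) : Prop :=
  1 ∈ A ∧ (∀ a ∈ A, ∀ b ∈ A, β.add a b ∈ A) ∧ ∀ a ∈ A, β.neg a ∈ A

/-- A left ideal of a left brace: an additive subgroup stable under all `λ_a`. -/
def IsLeftIdeal (β : BraceOps G) (L : Set G) : Prop :=
  β.IsAddSubgroup L ∧ ∀ a : G, ∀ b ∈ L, β.lam a b ∈ L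

/-- An ideal of a left brace: a normal subgroup of the multiplicative group stable
under all `λ_a`. -/
def IsIdeal (β : BraceOps G) (I : Set G) : Prop :=
  1 ∈ I ∧ (∀ a ∈ I, ∀ b ∈ I, a * b ∈ I) ∧ (∀ a ∈ I, a⁻¹ ∈ I) ∧
    (∀ g : G, ∀ a ∈ I, g * a * g⁻¹ ∈ I) ∧ ∀ g : G, ∀ a ∈ I, β.lam g a ∈ I

end BraceOps

namespace YBE

variable {X : Type u}

/-- `σ x` as an element of `𝒢(X,r)`. -/
def σg (S : YBE X) (x : X) : ↥S.permGroup :=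
  ⟨S.σ x, Subgroup.subset_closure (Set.mem_range_self x)⟩

/-- The natural left-brace structure on `𝒢(X,r)`: the unique left brace structure whose
multiplicative group is `𝒢(X,r)`, whose additive group is generated by `{σ_x : x ∈ X}`,
and whose lambda map satisfies `λ_g(σ_y) = σ_{g(y)}`. -/
structure IsNaturalBrace (S : YBE X) (β : BraceOps ↥S.permGroup) : Prop where
  lam_sigma : ∀ (g : ↥S.permGroup) (y : X),
    β.lam g (S.σg y) = S.σg ((g : Equiv.Perm X) y)
  add_gen : ∀ A : Set ↥S.permGroup, β.IsAddSubgroup A → (∀ x : X, S.σg x ∈ A) →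
    ∀ g : ↥S.permGroup, g ∈ A

/-- The product `P_{τ(1)} P_{τ(2)} ⋯ P_{τ(i)}` of Sylow subgroups of the additive group of
the left brace `𝒢(X,r)`, taken inside the multiplicative group. -/
def sylProdTake (S : YBE X) (β : BraceOps ↥S.permGroup) {n : ℕ} (p : Fin n → ℕ)
    (τ : Equiv.Perm (Fin n)) (i : ℕ) : Set ↥S.permGroup :=
  ((List.ofFn fun j : Fin n => β.addSylow (p (τ j))).take i).prod

/-- The product `P_{i+1} P_{i+2} ⋯ P_n` of Sylow subgroups of the additive group of the
left brace `𝒢(X,r)`, taken inside the multiplicative group. -/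
def sylProdDrop (S : YBE X) (β : BraceOps ↥S.permGroup) {n : ℕ} (p : Fin n → ℕ)
    (i : ℕ) : Set ↥S.permGroup :=
  ((List.ofFn fun j : Fin n => β.addSylow (p j)).drop i).prod

end YBE

/-- The holomorph `ℤ/(q) ⋊ Aut(ℤ/(q))` of the cyclic group of order `q`. -/
abbrev Hol (q : ℕ) :=
  SemidirectProduct (Multiplicative (ZMod q)) (MulAut (Multiplicative (ZMod q)))
    (MonoidHom.id (MulAut (Multiplicative (ZMod q))))

/-- Kronecker delta `δ_{u,w} ∈ ℤ/(q)`. -/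
noncomputable def kdelta (q : ℕ) {α : Type v} (u w : α) : ZMod q :=
  letI := Classical.propDecidable (u = w)
  if u = w then 1 else 0

/-- The map `σ'_{(a,x)}(b,y) = (b + δ_{x,σ_x(y)}, σ_x(y))` on `ℤ/(q) × Y`. -/
noncomputable def extMap {Y : Type v} (T : YBE Y) (q : ℕ) (a b : ZMod q × Y) :
    ZMod q × Y :=
  (b.1 + kdelta q a.2 (T.σ a.2 b.2), T.σ a.2 b.2)

/-!
Induction on the multipermutation level. For a retraction `f : X → Ret(X,r)` the induced map
`𝒢(X,r) → 𝒢(Ret(X,r))` is onto and its kernel lies in the socle (`λ_m` fixes every `σ_x`), so the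
natural brace of `𝒢(Ret(X,r))` is a quotient brace. Indecomposability makes all fibres of `f` of
one size `k`, so `|X| = |Ret(X,r)| · k`, and the kernel, abelian and normal, has orbits of one size
dividing `k`; hence `k` kills the kernel. Inductively, `|X|` kills the additive group and
`λ_a b = b` for `a, b` in one additive Sylow subgroup `P_q`: if `q ∣ k` then `q ∤ |Ret(X,r)|` and
`P_q` lies in the kernel; otherwise `λ_a b - b` is a `q`-element of the kernel.

As `|X|` is squarefree, each `P_q` then has exponent `q`, is closed under `∘` (which agrees with `+`
on it) and has index prime to `q`; coprime splitting peels the factors of `P_1 ⋯ P_n` off any `g`.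
-/

open Function

lemma eq_zero_of_coprime_of_nsmul_eq_zero {M : Type*} [AddMonoid M] {x : M} {a b : ℕ}
    (hab : a.Coprime b) (ha : a • x = 0) (hb : b • x = 0) : x = 0 :=
  AddMonoid.addOrderOf_eq_one_iff.mp <| Nat.eq_one_of_dvd_coprimes hab
    (addOrderOf_dvd_of_nsmul_eq_zero ha) (addOrderOf_dvd_of_nsmul_eq_zero hb)

lemma exists_add_of_coprime_of_mul_nsmul_eq_zero {A : Type*} [AddCommGroup A] {a b : ℕ}
    (hab : a.Coprime b) {x : A} (hx : (a * b) • x = 0) :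
    ∃ u v : A, a • u = 0 ∧ b • v = 0 ∧ x = u + v := by
  have hx' : ((a : ℤ) * b) • x = 0 := by exact_mod_cast hx
  refine ⟨((b : ℤ) * Nat.gcdB a b) • x, ((a : ℤ) * Nat.gcdA a b) • x, ?_, ?_, ?_⟩
  · rw [← natCast_zsmul, smul_smul,
      show (a : ℤ) * (b * Nat.gcdB a b) = Nat.gcdB a b * (a * b) by ring, ← smul_smul, hx',
      smul_zero]
  · rw [← natCast_zsmul, smul_smul,
      show (b : ℤ) * (a * Nat.gcdA a b) = Nat.gcdA a b * (a * b) by ring, ← smul_smul, hx',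
      smul_zero]
  · have hgcd : (b : ℤ) * Nat.gcdB a b + a * Nat.gcdA a b = 1 := by
      have := Nat.gcd_eq_gcd_ab a b
      rw [hab.gcd_eq_one, Nat.cast_one] at this
      linarith
    rw [← add_smul, hgcd, one_smul]

lemma AddCommGroup.not_dvd_index_primaryComponent {A : Type*} [AddCommGroup A] [Finite A]
    {q : ℕ} (hq : q.Prime) : ¬ q ∣ (AddCommGroup.primaryComponent A q).index := by
  have : Fact q.Prime := ⟨hq⟩
  intro hdvd
  obtain ⟨y, hy⟩ := exists_prime_addOrderOf_dvd_card' (G := A ⧸ primaryComponent A q) q hdvd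
  obtain ⟨x, rfl⟩ := QuotientAddGroup.mk_surjective y
  have hqx : q • x ∈ primaryComponent A q := by
    rw [← QuotientAddGroup.eq_zero_iff, QuotientAddGroup.mk_nsmul]
    simpa only [hy] using addOrderOf_nsmul_eq_zero (x : A ⧸ primaryComponent A q)
  obtain ⟨k, hk⟩ := hqx
  have hx : x ∈ primaryComponent A q := ⟨k + 1, by rw [pow_succ', mul_nsmul, hk]⟩
  rw [(QuotientAddGroup.eq_zero_iff x).mpr hx, addOrderOf_zero] at hy
  exact hq.one_lt.ne hy

lemma Nat.card_sigma_of_card_eq {ι : Type*} {γ : ι → Type*} [Finite ι] [∀ i, Finite (γ i)]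
    {k : ℕ} (h : ∀ i, Nat.card (γ i) = k) : Nat.card (Σ i, γ i) = Nat.card ι * k := by
  have := Fintype.ofFinite ι
  rw [Nat.card_sigma, Finset.sum_congr rfl fun i _ => h i, Finset.sum_const, Finset.card_univ,
    smul_eq_mul, Nat.card_eq_fintype_card]

namespace MulAction

variable {K α : Type*} [Group K] [MulAction K α]

lemma pow_natCard_orbit_smul [IsMulCommutative K] (m : K) (x : α) :
    m ^ Nat.card (orbit K x) • x = x := by
  rw [Nat.card_coe_set_eq, ← index_stabilizer]
  exact mem_stabilizer_iff.mp ((stabilizer K x).pow_index_mem m)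

lemma dvd_natCard_of_natCard_orbit_eq [Finite α] {t : ℕ}
    (h : ∀ x : α, Nat.card (orbit K x) = t) : t ∣ Nat.card α := by
  rw [Nat.card_congr (selfEquivSigmaOrbits K α), Nat.card_sigma_of_card_eq fun _ => h _]
  exact dvd_mul_left _ _

lemma natCard_orbit_smul_eq {G : Type*} [Group G] [MulAction G α] (N : Subgroup G) [N.Normal]
    (g : G) (x : α) : Nat.card (orbit N (g • x)) = Nat.card (orbit N x) := by
  rw [← smul_orbit_eq_orbit_smul, Set.natCard_smul_set]

lemma pow_natCard_subMulAction_eq_one [IsMulCommutative K] [FaithfulSMul K α]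
    (hK : ∀ x y : α, Nat.card (orbit K x) = Nat.card (orbit K y)) (F : SubMulAction K α)
    [Finite F] (m : K) : m ^ Nat.card F = 1 := by
  refine eq_of_smul_eq_smul (α := α) fun x => ?_
  obtain ⟨c, hc⟩ : Nat.card (orbit K x) ∣ Nat.card F :=
    dvd_natCard_of_natCard_orbit_eq (K := K) fun y => by
      rw [← Nat.card_image_of_injective Subtype.val_injective, SubMulAction.val_image_orbit, hK]
  rw [hc, pow_mul, one_smul]
  exact mem_stabilizer_iff.mp (pow_mem (mem_stabilizer_iff.mpr (pow_natCard_orbit_smul m x)) c)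

end MulAction

namespace BraceOps

variable {G : Type*} [Group G] (β : BraceOps G)

def AdditiveGroup (_ : BraceOps G) : Type _ := G

def additive : G ≃ β.AdditiveGroup := Equiv.refl G

instance : AddCommGroup β.AdditiveGroup where
  add := β.add
  zero := β.additive 1
  neg := β.neg
  add_assoc := β.add_assoc
  add_comm := β.add_comm
  zero_add := β.zero_add
  add_zero a := (β.add_comm a 1).trans (β.zero_add a)
  neg_add_cancel := β.neg_add_cancel
  nsmul n a := β.nsmul n a
  nsmul_zero _ := rfl
  nsmul_succ n a := β.add_comm a (β.nsmul n a)
  zsmul z a := match z with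
    | Int.ofNat n => β.nsmul n a
    | Int.negSucc n => β.neg (β.nsmul (n + 1) a)
  zsmul_zero' _ := rfl
  zsmul_succ' n a := β.add_comm a (β.nsmul n a)
  zsmul_neg' _ _ := rfl

variable {β}

lemma additive_add (a b : G) : β.additive (β.add a b) = β.additive a + β.additive b := rfl

lemma additive_neg (a : G) : β.additive (β.neg a) = -β.additive a := rfl

@[simp] lemma additive_one : β.additive 1 = 0 := rfl

@[simp] lemma additive_eq_zero {a : G} : β.additive a = 0 ↔ a = 1 := β.additive.apply_eq_iff_eq

lemma additive_nsmul (n : ℕ) (a : G) : β.additive (β.nsmul n a) = n • β.additive a := rfl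

lemma mem_addSylow {q : ℕ} {a : G} : a ∈ β.addSylow q ↔ ∃ k, q ^ k • β.additive a = 0 :=
  Iff.rfl

lemma isAddSubgroup_preimage (A : AddSubgroup β.AdditiveGroup) :
    β.IsAddSubgroup (β.additive ⁻¹' A) :=
  ⟨A.zero_mem, fun _ ha _ hb => A.add_mem ha hb, fun _ ha => A.neg_mem ha⟩

lemma isAddSubgroup_addSylow (q : ℕ) : β.IsAddSubgroup (β.addSylow q) :=
  isAddSubgroup_preimage (AddCommGroup.primaryComponent β.AdditiveGroup q)

lemma eq_one_of_mem_addSylow {q e : ℕ} (hq : q.Prime) (hqe : ¬ q ∣ e) {a : G}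
    (ha : a ∈ β.addSylow q) (he : e • β.additive a = 0) : a = 1 := by
  obtain ⟨k, hk⟩ := ha
  exact additive_eq_zero.mp <|
    eq_zero_of_coprime_of_nsmul_eq_zero ((hq.coprime_iff_not_dvd.mpr hqe).pow_left k) hk he

lemma additive_lam (a b : G) : β.additive (β.lam a b) = -β.additive a + β.additive (a * b) :=
  rfl

lemma additive_mul (a b : G) : β.additive (a * b) = β.additive a + β.additive (β.lam a b) := by
  rw [additive_lam]; abel

lemma additive_mul_add (a b c : G) :
    β.additive (a * β.add b c) = β.additive (a * b) + β.additive (a * c) - β.additive a := by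
  rw [← additive_add, ← β.compat, additive_add]; abel

variable (β) in
def lamHom (a : G) : β.AdditiveGroup →+ β.AdditiveGroup where
  toFun x := β.additive (β.lam a (β.additive.symm x))
  map_zero' := by
    change β.additive (β.lam a 1) = 0
    rw [additive_lam, mul_one]; abel
  map_add' x y := by
    obtain ⟨b, rfl⟩ := β.additive.surjective x
    obtain ⟨c, rfl⟩ := β.additive.surjective y
    simp only [← additive_add, Equiv.symm_apply_apply]
    rw [additive_lam, additive_add, additive_lam, additive_lam, additive_mul_add]; abel

lemma additive_lam_eq_lamHom (a b : G) : β.additive (β.lam a b) = β.lamHom a (β.additive b) :=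
  rfl

lemma lam_mem_addSylow {q : ℕ} (a : G) {b : G} (hb : b ∈ β.addSylow q) :
    β.lam a b ∈ β.addSylow q := by
  obtain ⟨k, hk⟩ := mem_addSylow.mp hb
  exact mem_addSylow.mpr ⟨k, by rw [additive_lam_eq_lamHom, ← map_nsmul, hk, map_zero]⟩

lemma lam_mul (a b c : G) : β.lam (a * b) c = β.lam a (β.lam b c) := by
  apply β.additive.injective
  have hbc : b * c = β.add b (β.lam b c) := β.additive.injective (additive_mul b c)
  rw [additive_lam, additive_lam, mul_assoc, hbc, additive_mul_add, additive_mul a (β.lam b c)]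
  abel

@[simp] lemma lam_one_left (a : G) : β.lam 1 a = a := by
  apply β.additive.injective
  rw [additive_lam, one_mul, additive_one]; abel

lemma lam_lam_inv (a b : G) : β.lam a (β.lam a⁻¹ b) = b := by
  rw [← lam_mul, mul_inv_cancel, lam_one_left]

lemma mem_socle_iff_lam {a : G} : a ∈ β.socle ↔ ∀ b, β.lam a b = b := by
  refine forall_congr' fun b => ?_
  rw [← β.additive.apply_eq_iff_eq, ← β.additive.apply_eq_iff_eq, additive_add, additive_mul]
  exact add_right_inj _

lemma additive_mul_of_mem_socle {m : G} (hm : m ∈ β.socle) (b : G) :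
    β.additive (m * b) = β.additive m + β.additive b :=
  congrArg β.additive (hm b)

lemma mul_comm_of_mem_socle {a b : G} (ha : a ∈ β.socle) (hb : b ∈ β.socle) : a * b = b * a :=
  β.additive.injective <| by
    rw [additive_mul_of_mem_socle ha, additive_mul_of_mem_socle hb, _root_.add_comm]

lemma inv_eq_neg_of_mem_socle {m : G} (hm : m ∈ β.socle) : m⁻¹ = β.neg m := by
  refine inv_eq_of_mul_eq_one_right (β.additive.injective ?_)
  rw [additive_mul_of_mem_socle hm, additive_neg, additive_one, add_neg_cancel]

lemma additive_pow_of_mem_socle {m : G} (hm : m ∈ β.socle) (n : ℕ) :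
    β.additive (m ^ n) = n • β.additive m := by
  induction n with
  | zero => simp
  | succ n ih => rw [pow_succ', additive_mul_of_mem_socle hm, ih, succ_nsmul']

section Map

variable {H : Type*} [Group H] {Φ : G →* H} (hker : (Φ.ker : Set G) ⊆ β.socle)
include hker

lemma map_add_eq_of_map_eq {a a' b b' : G} (ha : Φ a = Φ a') (hb : Φ b = Φ b') :
    Φ (β.add a b) = Φ (β.add a' b') := by
  have hm : a' * a⁻¹ ∈ Φ.ker := by simp [MonoidHom.mem_ker, ha]
  have hm' : b' * b⁻¹ ∈ Φ.ker := by simp [MonoidHom.mem_ker, hb]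
  have key : β.add a' b' = (a' * a⁻¹) * ((b' * b⁻¹) * β.add a b) := by
    apply β.additive.injective
    conv_lhs => rw [← inv_mul_cancel_right a' a, ← inv_mul_cancel_right b' b]
    simp only [additive_add, additive_mul_of_mem_socle (hker hm),
      additive_mul_of_mem_socle (hker hm')]
    abel
  rw [key, map_mul, MonoidHom.mem_ker.mp hm, one_mul, map_mul, MonoidHom.mem_ker.mp hm', one_mul]

lemma map_neg_eq_of_map_eq {a a' : G} (ha : Φ a = Φ a') : Φ (β.neg a) = Φ (β.neg a') := by
  have hm : a' * a⁻¹ ∈ Φ.ker := by simp [MonoidHom.mem_ker, ha]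
  have key : β.neg a' = (a' * a⁻¹)⁻¹ * β.neg a := by
    apply β.additive.injective
    conv_lhs => rw [← inv_mul_cancel_right a' a]
    rw [additive_mul_of_mem_socle (hker (inv_mem hm)), inv_eq_neg_of_mem_socle (hker hm),
      additive_neg, additive_neg, additive_neg, additive_mul_of_mem_socle (hker hm)]
    abel
  rw [key, map_mul, map_inv, MonoidHom.mem_ker.mp hm, inv_one, one_mul]

variable (hΦ : Surjective Φ)

lemma map_add_surjInv (a b : G) :
    Φ (β.add (surjInv hΦ (Φ a)) (surjInv hΦ (Φ b))) = Φ (β.add a b) :=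
  map_add_eq_of_map_eq hker (surjInv_eq hΦ _) (surjInv_eq hΦ _)

lemma map_neg_surjInv (a : G) : Φ (β.neg (surjInv hΦ (Φ a))) = Φ (β.neg a) :=
  map_neg_eq_of_map_eq hker (surjInv_eq hΦ _)

/-- The quotient brace on `H ≅ G ⧸ ker Φ`, well defined because `ker Φ` lies in the socle,
where multiplication is addition. -/
noncomputable def map : BraceOps H where
  add u v := Φ (β.add (surjInv hΦ u) (surjInv hΦ v))
  neg u := Φ (β.neg (surjInv hΦ u))
  add_assoc u v w := by
    obtain ⟨a, rfl⟩ := hΦ u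
    obtain ⟨b, rfl⟩ := hΦ v
    obtain ⟨c, rfl⟩ := hΦ w
    simp only [map_add_surjInv hker hΦ, β.add_assoc]
  add_comm u v := by
    obtain ⟨a, rfl⟩ := hΦ u
    obtain ⟨b, rfl⟩ := hΦ v
    simp only [map_add_surjInv hker hΦ, β.add_comm]
  zero_add u := by
    obtain ⟨a, rfl⟩ := hΦ u
    simpa only [map_one, β.zero_add] using map_add_surjInv hker hΦ 1 a
  neg_add_cancel u := by
    obtain ⟨a, rfl⟩ := hΦ u
    simp only [map_neg_surjInv hker hΦ, map_add_surjInv hker hΦ, β.neg_add_cancel, map_one]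
  compat u v w := by
    obtain ⟨a, rfl⟩ := hΦ u
    obtain ⟨b, rfl⟩ := hΦ v
    obtain ⟨c, rfl⟩ := hΦ w
    simp only [map_add_surjInv hker hΦ, ← map_mul, β.compat]

lemma apply_add (a b : G) : Φ (β.add a b) = (β.map hker hΦ).add (Φ a) (Φ b) :=
  (map_add_surjInv hker hΦ a b).symm

lemma apply_neg (a : G) : Φ (β.neg a) = (β.map hker hΦ).neg (Φ a) :=
  (map_neg_surjInv hker hΦ a).symm

lemma apply_lam (a b : G) : Φ (β.lam a b) = (β.map hker hΦ).lam (Φ a) (Φ b) := by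
  rw [lam, lam, apply_add hker hΦ, apply_neg hker hΦ, map_mul]

lemma apply_nsmul (n : ℕ) (a : G) : Φ (β.nsmul n a) = (β.map hker hΦ).nsmul n (Φ a) := by
  induction n with
  | zero => exact map_one Φ
  | succ n ih => rw [nsmul, apply_add hker hΦ, ih, nsmul]

lemma apply_mem_addSylow {q : ℕ} {a : G} (ha : a ∈ β.addSylow q) :
    Φ a ∈ (β.map hker hΦ).addSylow q := by
  obtain ⟨k, hk⟩ := ha
  exact ⟨k, by rw [← apply_nsmul hker hΦ, hk, map_one]⟩
variable {e k : ℕ} (he : ∀ u : H, e • (β.map hker hΦ).additive u = 0)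
  (hk : ∀ m ∈ Φ.ker, k • β.additive m = 0)
include he hk

lemma nsmul_eq_zero_of_map (a : G) : (e * k) • β.additive a = 0 := by
  have : β.nsmul e a ∈ Φ.ker := by
    rw [MonoidHom.mem_ker, apply_nsmul hker hΦ]
    exact he (Φ a)
  rw [mul_nsmul, ← additive_nsmul]
  exact hk _ this

lemma lam_eq_self_of_map (hsq : Squarefree (e * k)) {q : ℕ} (hq : q.Prime)
    (hlam : ∀ u ∈ (β.map hker hΦ).addSylow q, ∀ v ∈ (β.map hker hΦ).addSylow q,
      (β.map hker hΦ).lam u v = v)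
    {a b : G} (ha : a ∈ β.addSylow q) (hb : b ∈ β.addSylow q) : β.lam a b = b := by
  by_cases hqk : q ∣ k
  · have hqe : ¬ q ∣ e := fun hqe =>
      hq.one_lt.ne' (Nat.isUnit_iff.mp (hsq q (mul_dvd_mul hqe hqk)))
    have : Φ a = 1 := (β.map hker hΦ).eq_one_of_mem_addSylow hq hqe
      (apply_mem_addSylow hker hΦ ha) (he _)
    exact mem_socle_iff_lam.mp (hker this) b
  · -- `λ_a b - b` lies in the kernel, which has exponent `k` prime to `q`
    set s := β.add (β.lam a b) (β.neg b)
    have hs : s ∈ β.addSylow q :=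
      (β.isAddSubgroup_addSylow q).2.1 _ (lam_mem_addSylow a hb) _
        ((β.isAddSubgroup_addSylow q).2.2 _ hb)
    have hsker : s ∈ Φ.ker := by
      rw [MonoidHom.mem_ker, apply_add hker hΦ, apply_neg hker hΦ, apply_lam hker hΦ,
        hlam _ (apply_mem_addSylow hker hΦ ha) _ (apply_mem_addSylow hker hΦ hb),
        ← (β.map hker hΦ).additive_eq_zero, additive_add, additive_neg, add_neg_cancel]
    have := congrArg β.additive (β.eq_one_of_mem_addSylow hq hqk hs (hk s hsker))
    rwa [additive_add, additive_neg, additive_one, add_neg_eq_zero,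
      β.additive.apply_eq_iff_eq] at this

end Map

lemma dvd_of_prime_dvd_card [Finite G] {e : ℕ} (he : ∀ a, e • β.additive a = 0) {q : ℕ}
    (hq : q.Prime) (hdvd : q ∣ Nat.card G) : q ∣ e := by
  have : Fact q.Prime := ⟨hq⟩
  have : Finite β.AdditiveGroup := ‹Finite G›
  obtain ⟨x, hx⟩ := exists_prime_addOrderOf_dvd_card' (G := β.AdditiveGroup) q hdvd
  rw [← hx]
  exact addOrderOf_dvd_of_nsmul_eq_zero (he (β.additive.symm x))

lemma prime_nsmul_eq_zero_of_mem_addSylow {e : ℕ} (hsq : Squarefree e)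
    (he : ∀ a, e • β.additive a = 0) {q : ℕ} (hq : q.Prime) {a : G} (ha : a ∈ β.addSylow q) :
    q • β.additive a = 0 := by
  obtain ⟨k, hk⟩ := mem_addSylow.mp ha
  obtain ⟨l, -, hord⟩ := (Nat.dvd_prime_pow hq).mp (addOrderOf_dvd_of_nsmul_eq_zero hk)
  have hl : l ≤ 1 := by
    by_contra! hl
    have hqq : q * q ∣ e := by
      rw [← pow_two]
      exact (pow_dvd_pow q hl).trans (hord ▸ addOrderOf_dvd_of_nsmul_eq_zero (he a))
    exact hq.one_lt.ne' (Nat.isUnit_iff.mp (hsq q hqq))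
  rw [← addOrderOf_dvd_iff_nsmul_eq_zero, hord]
  exact (pow_dvd_pow q hl).trans (pow_one q).dvd

lemma exists_eq_prod_ofFn : ∀ {n : ℕ} (p : Fin n → ℕ), Pairwise (Nat.Coprime on p) →
    ∀ g : G, (∏ i, p i) • β.additive g = 0 →
    ∃ f : Fin n → G, (∀ i, p i • β.additive (f i) = 0) ∧ g = (List.ofFn f).prod
  | 0, _, _, g, hg => ⟨Fin.elim0, fun i => i.elim0, by simpa using hg⟩
  | n + 1, p, hp, g, hg => by
    rw [Fin.prod_univ_succ] at hg
    obtain ⟨u, v, hu, hv, huv⟩ := exists_add_of_coprime_of_mul_nsmul_eq_zero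
      (Nat.Coprime.prod_right fun i _ => hp (Fin.succ_ne_zero i).symm) hg
    set a := β.additive.symm u
    -- write `g = a ∘ λ_{a⁻¹}(v)` and decompose the second factor recursively
    obtain ⟨f, hf, hc⟩ := exists_eq_prod_ofFn (fun i => p i.succ)
      (hp.comp_of_injective (Fin.succ_injective n)) (β.lam a⁻¹ (β.additive.symm v))
      (by rw [additive_lam_eq_lamHom, ← map_nsmul, Equiv.apply_symm_apply, hv, map_zero])
    refine ⟨Fin.cons a f, Fin.cases (by simpa [a] using hu) fun j => by simpa using hf j, ?_⟩
    rw [List.ofFn_succ, List.prod_cons]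
    simp only [Fin.cons_zero, Fin.cons_succ]
    rw [← hc]
    apply β.additive.injective
    rw [additive_mul, lam_lam_inv, huv, Equiv.apply_symm_apply, Equiv.apply_symm_apply]

section TrivialSylow

variable {q : ℕ} (hlam : ∀ a ∈ β.addSylow q, ∀ b ∈ β.addSylow q, β.lam a b = b)
include hlam

lemma mul_eq_add_of_mem_addSylow {a b : G} (ha : a ∈ β.addSylow q) (hb : b ∈ β.addSylow q) :
    a * b = β.add a b :=
  β.additive.injective (by rw [additive_mul, hlam a ha b hb, additive_add])

def addSylowSubgroup : Subgroup G where
  carrier := β.addSylow q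
  one_mem' := (β.isAddSubgroup_addSylow q).1
  mul_mem' {a b} ha hb :=
    mul_eq_add_of_mem_addSylow hlam ha hb ▸ (β.isAddSubgroup_addSylow q).2.1 a ha b hb
  inv_mem' {a} ha := by
    have hneg := (β.isAddSubgroup_addSylow q).2.2 a ha
    have : a * β.neg a = 1 := β.additive.injective <| by
      rw [mul_eq_add_of_mem_addSylow hlam ha hneg, additive_add, additive_neg, add_neg_cancel,
        additive_one]
    rwa [inv_eq_of_mul_eq_one_right this]

lemma additive_pow_of_mem_addSylow {a : G} (ha : a ∈ β.addSylow q) (n : ℕ) :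
    β.additive (a ^ n) = n • β.additive a := by
  induction n with
  | zero => simp
  | succ n ih =>
    rw [pow_succ', mul_eq_add_of_mem_addSylow hlam ha ((β.addSylowSubgroup hlam).pow_mem ha n),
      additive_add, ih, succ_nsmul']

lemma isPGroup_addSylowSubgroup : IsPGroup q (β.addSylowSubgroup hlam) := by
  rintro ⟨a, ha⟩
  obtain ⟨k, hk⟩ := mem_addSylow.mp ha
  refine ⟨k, Subtype.ext (β.additive.injective ?_)⟩
  rw [Subgroup.coe_pow, additive_pow_of_mem_addSylow hlam ha, hk, OneMemClass.coe_one,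
    additive_one]

lemma not_dvd_index_addSylowSubgroup [Finite G] (hq : q.Prime) :
    ¬ q ∣ (β.addSylowSubgroup hlam).index := by
  have : Finite β.AdditiveGroup := ‹Finite G›
  have hindex : (β.addSylowSubgroup hlam).index =
      (AddCommGroup.primaryComponent β.AdditiveGroup q).index := by
    refine Nat.eq_of_mul_eq_mul_left (Nat.card_pos (α := β.addSylowSubgroup hlam)) ?_
    rw [Subgroup.card_mul_index]
    -- both subgroups have carrier `β.addSylow q`
    exact (AddSubgroup.card_mul_index (AddCommGroup.primaryComponent β.AdditiveGroup q)).symm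
  rw [hindex]
  exact AddCommGroup.not_dvd_index_primaryComponent hq

lemma exists_sylow_coe_eq_addSylow [Finite G] (hq : q.Prime) :
    ∃ Q : Sylow q G, ((Q : Subgroup G) : Set G) = β.addSylow q :=
  have : Fact q.Prime := ⟨hq⟩
  ⟨(β.isPGroup_addSylowSubgroup hlam).toSylow (β.not_dvd_index_addSylowSubgroup hlam hq), rfl⟩

end TrivialSylow

end BraceOps

namespace YBE

open BraceOps

variable {X : Type u} {Z : Type v}

structure IsRetractMap (S : YBE X) (T : YBE Z) (f : X → Z) : Prop where
  surjective : Surjective f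
  isHom : S.IsHom T f
  eq_iff : ∀ x x', f x = f x' ↔ S.σ x = S.σ x'

variable {S : YBE X} {β : BraceOps S.permGroup}

lemma IsNaturalBrace.sigma_apply_eq (hβ : S.IsNaturalBrace β) (g : S.permGroup) {x y : X}
    (h : S.σ x = S.σ y) : S.σ ((g : Perm X) x) = S.σ ((g : Perm X) y) := by
  have h' : S.σg x = S.σg y := Subtype.ext h
  have := (hβ.lam_sigma g x).symm.trans (h' ▸ hβ.lam_sigma g y)
  exact congrArg Subtype.val this

lemma IsNaturalBrace.mem_socle (hβ : S.IsNaturalBrace β) {m : S.permGroup}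
    (hm : ∀ x, S.σ ((m : Perm X) x) = S.σ x) : m ∈ β.socle :=
  BraceOps.mem_socle_iff_lam.mpr <| hβ.add_gen _
    (β.isAddSubgroup_preimage ((β.lamHom m).eqLocus (AddMonoidHom.id _)))
    (fun x => (hβ.lam_sigma m x).trans (Subtype.ext (hm x)))

lemma closure_range_σg (S : YBE X) : Subgroup.closure (Set.range S.σg) = ⊤ := by
  have hσ : Set.range S.σg = ((↑) : S.permGroup → Perm X) ⁻¹' Set.range S.σ := by
    ext g
    constructor
    · rintro ⟨x, rfl⟩
      exact ⟨x, rfl⟩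
    · rintro ⟨x, hx⟩
      exact ⟨x, Subtype.ext hx⟩
  rw [hσ]
  exact Subgroup.closure_closure_coe_preimage

namespace IsRetractMap

variable {T : YBE Z} {f : X → Z} (hβ : S.IsNaturalBrace β) (hf : S.IsRetractMap T f)
include hβ hf

lemma apply_eq_apply (g : S.permGroup) {x y : X} (h : f x = f y) :
    f ((g : Perm X) x) = f ((g : Perm X) y) :=
  (hf.eq_iff _ _).mpr (hβ.sigma_apply_eq g ((hf.eq_iff _ _).mp h))

lemma apply_surjInv (g : S.permGroup) (x : X) :
    f ((g : Perm X) (surjInv hf.surjective (f x))) = f ((g : Perm X) x) :=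
  apply_eq_apply hβ hf g (surjInv_eq hf.surjective (f x))

noncomputable def descendPerm (g : S.permGroup) : Perm Z where
  toFun z := f ((g : Perm X) (surjInv hf.surjective z))
  invFun z := f (((g⁻¹ : S.permGroup) : Perm X) (surjInv hf.surjective z))
  left_inv z := by
    obtain ⟨x, rfl⟩ := hf.surjective z
    simp only [apply_surjInv hβ hf]
    simp
  right_inv z := by
    obtain ⟨x, rfl⟩ := hf.surjective z
    simp only [apply_surjInv hβ hf]
    simp

lemma descendPerm_apply (g : S.permGroup) (x : X) :
    hf.descendPerm hβ g (f x) = f ((g : Perm X) x) :=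
  apply_surjInv hβ hf g x

noncomputable def descendHom : S.permGroup →* Perm Z :=
  MonoidHom.mk' (hf.descendPerm hβ) fun g h => Equiv.ext fun z => by
    obtain ⟨x, rfl⟩ := hf.surjective z
    simp only [Perm.mul_apply, descendPerm_apply, Subgroup.coe_mul]

lemma descendHom_apply (g : S.permGroup) (x : X) :
    hf.descendHom hβ g (f x) = f ((g : Perm X) x) :=
  descendPerm_apply hβ hf g x

lemma descendHom_σg (x : X) : hf.descendHom hβ (S.σg x) = T.σ (f x) :=
  Equiv.ext fun z => by
    obtain ⟨y, rfl⟩ := hf.surjective z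
    exact (descendHom_apply hβ hf _ y).trans (hf.isHom x y)

lemma range_descendHom : (hf.descendHom hβ).range = T.permGroup := by
  have hσ : hf.descendHom hβ ∘ S.σg = T.σ ∘ f := funext (descendHom_σg hβ hf)
  rw [MonoidHom.range_eq_map, ← closure_range_σg, MonoidHom.map_closure, ← Set.range_comp, hσ,
    hf.surjective.range_comp]
  rfl

noncomputable def permHom : S.permGroup →* T.permGroup :=
  (hf.descendHom hβ).codRestrict T.permGroup fun g =>
    range_descendHom hβ hf ▸ ⟨g, rfl⟩

lemma permHom_apply (g : S.permGroup) (x : X) :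
    ((hf.permHom hβ g : T.permGroup) : Perm Z) (f x) = f ((g : Perm X) x) :=
  descendHom_apply hβ hf g x

lemma permHom_σg (x : X) : hf.permHom hβ (S.σg x) = T.σg (f x) :=
  Subtype.ext (descendHom_σg hβ hf x)

lemma permHom_surjective : Surjective (hf.permHom hβ) := by
  rintro ⟨u, hu⟩
  rw [← range_descendHom hβ hf] at hu
  obtain ⟨g, rfl⟩ := hu
  exact ⟨g, rfl⟩

lemma mem_ker_permHom {m : S.permGroup} :
    m ∈ (hf.permHom hβ).ker ↔ ∀ x, f ((m : Perm X) x) = f x := by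
  rw [MonoidHom.mem_ker, Subtype.ext_iff, Subgroup.coe_one]
  refine ⟨fun h x => ?_, fun h => Equiv.ext fun z => ?_⟩
  · rw [← permHom_apply hβ hf, h, Perm.one_apply]
  · obtain ⟨x, rfl⟩ := hf.surjective z
    rw [permHom_apply hβ hf, h, Perm.one_apply]

lemma ker_permHom_subset_socle : ((hf.permHom hβ).ker : Set S.permGroup) ⊆ β.socle :=
  fun _ hm => hβ.mem_socle fun x => (hf.eq_iff _ _).mp ((mem_ker_permHom hβ hf).mp hm x)

noncomputable abbrev retBrace : BraceOps T.permGroup :=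
  β.map (ker_permHom_subset_socle hβ hf) (permHom_surjective hβ hf)

lemma isNaturalBrace_retBrace : T.IsNaturalBrace (hf.retBrace hβ) where
  lam_sigma u z := by
    obtain ⟨g, rfl⟩ := permHom_surjective hβ hf u
    obtain ⟨x, rfl⟩ := hf.surjective z
    rw [← permHom_σg hβ hf, ← BraceOps.apply_lam, hβ.lam_sigma, permHom_σg hβ hf,
      permHom_apply hβ hf]
  add_gen A hA hσ u := by
    obtain ⟨g, rfl⟩ := permHom_surjective hβ hf u
    refine hβ.add_gen (hf.permHom hβ ⁻¹' A) ⟨?_, fun a ha b hb => ?_, fun a ha => ?_⟩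
      (fun x => ?_) g
    · simpa only [Set.mem_preimage, map_one] using hA.1
    · rw [Set.mem_preimage, BraceOps.apply_add (ker_permHom_subset_socle hβ hf)]
      exact hA.2.1 _ ha _ hb
    · rw [Set.mem_preimage, BraceOps.apply_neg (ker_permHom_subset_socle hβ hf)]
      exact hA.2.2 _ ha
    · simpa only [Set.mem_preimage, permHom_σg hβ hf] using hσ (f x)

lemma indecomposable (hind : S.Indecomposable) : T.Indecomposable := by
  intro z z'
  obtain ⟨x, rfl⟩ := hf.surjective z
  obtain ⟨x', rfl⟩ := hf.surjective z'
  obtain ⟨g, hg, hgx⟩ := hind x x'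
  exact ⟨_, (hf.permHom hβ ⟨g, hg⟩).2,
    (permHom_apply hβ hf ⟨g, hg⟩ x).trans (congrArg f hgx)⟩

lemma card_fiber_eq (hind : S.Indecomposable) (x y : X) :
    Nat.card (f ⁻¹' {f x}) = Nat.card (f ⁻¹' {f y}) := by
  obtain ⟨g, hg, rfl⟩ := hind x y
  refine Nat.card_congr (Equiv.subtypeEquiv g fun w => ?_)
  change f w = f x ↔ f (g w) = f (g x)
  rw [← permHom_apply hβ hf ⟨g, hg⟩, ← permHom_apply hβ hf ⟨g, hg⟩,
    Equiv.apply_eq_iff_eq]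

lemma card_eq_card_mul_card_fiber [Finite X] (hind : S.Indecomposable) (x₀ : X) :
    Nat.card X = Nat.card Z * Nat.card (f ⁻¹' {f x₀}) := by
  have : Finite Z := Finite.of_surjective f hf.surjective
  rw [← Nat.card_congr (Equiv.sigmaFiberEquiv f)]
  refine Nat.card_sigma_of_card_eq fun z => ?_
  obtain ⟨x, rfl⟩ := hf.surjective z
  exact card_fiber_eq hβ hf hind x x₀

lemma card_fiber_nsmul_eq_zero [Finite X] (hind : S.Indecomposable) (x₀ : X)
    {m : S.permGroup} (hm : m ∈ (hf.permHom hβ).ker) :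
    Nat.card (f ⁻¹' {f x₀}) • β.additive m = 0 := by
  set K := (hf.permHom hβ).ker
  have hsoc := ker_permHom_subset_socle hβ hf
  have : IsMulCommutative K :=
    ⟨⟨fun a b => Subtype.ext (mul_comm_of_mem_socle (hsoc a.2) (hsoc b.2))⟩⟩
  have horbit (x y : X) : Nat.card (MulAction.orbit K x) = Nat.card (MulAction.orbit K y) := by
    obtain ⟨g, hg, rfl⟩ := hind y x
    exact MulAction.natCard_orbit_smul_eq K (⟨g, hg⟩ : S.permGroup) y
  let F : SubMulAction K X :=
    { carrier := f ⁻¹' {f x₀}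
      smul_mem' := fun n x hx => ((mem_ker_permHom hβ hf).mp n.2 x).trans hx }
  have hpow := MulAction.pow_natCard_subMulAction_eq_one horbit F ⟨m, hm⟩
  rw [← additive_pow_of_mem_socle (hsoc hm)]
  exact additive_eq_zero.mpr (congrArg Subtype.val hpow)

end IsRetractMap

theorem card_nsmul_eq_zero_and_lam_eq_self_of_mpLevelLE (m : ℕ) : ∀ (X : Type u) (S : YBE X)
    (β : BraceOps S.permGroup), S.IsNaturalBrace β → Squarefree (Nat.card X) →
    S.Indecomposable → MPLevelLE m X S →
    (∀ a, Nat.card X • β.additive a = 0) ∧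
      ∀ q, q.Prime → ∀ a ∈ β.addSylow q, ∀ b ∈ β.addSylow q, β.lam a b = b := by
  induction m with
  | zero =>
    rintro X S β - - - ⟨-, hX⟩
    have htriv (g : S.permGroup) : g = 1 := Subtype.ext (Equiv.ext fun _ => hX.elim _ _)
    exact ⟨fun a => by rw [htriv a, additive_one, smul_zero],
      fun _ _ a _ b _ => (htriv _).trans (htriv b).symm⟩
  | succ m ih =>
    rintro X S β hβ hsq hind ⟨Z, T, ⟨f, hsurj, hhom, hfib⟩, hT⟩
    have hf : S.IsRetractMap T f := ⟨hsurj, hhom, hfib⟩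
    have : Finite X := Nat.finite_of_card_ne_zero hsq.ne_zero
    obtain ⟨x₀⟩ : Nonempty X := (Nat.card_pos_iff.mp (Nat.pos_of_ne_zero hsq.ne_zero)).1
    rw [hf.card_eq_card_mul_card_fiber hβ hind x₀] at hsq ⊢
    obtain ⟨he, hlam⟩ := ih Z T (hf.retBrace hβ) (hf.isNaturalBrace_retBrace hβ)
      hsq.of_mul_left (hf.indecomposable hβ hind) hT
    have hk (m) (hm : m ∈ (hf.permHom hβ).ker) := hf.card_fiber_nsmul_eq_zero hβ hind x₀ hm
    exact ⟨nsmul_eq_zero_of_map _ _ he hk,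
      fun q hq a ha b hb => lam_eq_self_of_map _ _ he hk hsq hq (hlam q hq) ha hb⟩

end YBE

/-- For an indecomposable multipermutation solution of square-free cardinality:
the only primes dividing `|𝒢(X,r)|` are `p 0, …, p (n-1)`; `𝒢(X,r) = P₁P₂⋯Pₙ` where `P i` is
the Sylow `p i`-subgroup of the additive group of the natural left brace; and each `P i` is an
elementary abelian `p i`-group on which both brace operations coincide (so `P i` is a trivial
brace and a Sylow `p i`-subgroup of the multiplicative group). -/
theorem statement9 {n : ℕ} {X : Type u} (p : Fin n → ℕ)
    (hp : ∀ i, Nat.Prime (p i)) (hinj : Function.Injective p)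
    (S : YBE X) (hcard : Nat.card X = Finset.univ.prod p)
    (hind : S.Indecomposable) (hmp : S.IsMultipermutation)
    (β : BraceOps ↥S.permGroup) (hβ : S.IsNaturalBrace β) :
    (∀ q : ℕ, q.Prime → q ∣ Nat.card ↥S.permGroup → ∃ i, p i = q) ∧
    (∀ g : ↥S.permGroup, ∃ f : Fin n → ↥S.permGroup,
      (∀ i, f i ∈ β.addSylow (p i)) ∧ g = (List.ofFn f).prod) ∧
    ∀ i : Fin n,
      β.IsAddSubgroup (β.addSylow (p i)) ∧
      (∀ a ∈ β.addSylow (p i), β.nsmul (p i) a = 1) ∧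
      (∀ a ∈ β.addSylow (p i), ∀ b ∈ β.addSylow (p i), a * b = β.add a b) ∧
      ∃ Q : Sylow (p i) ↥S.permGroup,
        ((Q : Subgroup ↥S.permGroup) : Set ↥S.permGroup) = β.addSylow (p i) := by
  have hcop : Pairwise (Nat.Coprime on p) := fun i j hij =>
    (Nat.coprime_primes (hp i) (hp j)).mpr (hinj.ne hij)
  have hsq : Squarefree (Nat.card X) := hcard ▸ Finset.squarefree_prod_of_pairwise_isCoprime
    (fun i _ j _ hij => Nat.coprime_iff_isRelPrime.mp (hcop hij)) fun i _ => (hp i).squarefree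
  have : Finite X := Nat.finite_of_card_ne_zero hsq.ne_zero
  obtain ⟨m, -, hlev⟩ := hmp
  obtain ⟨he, hlam⟩ :=
    YBE.card_nsmul_eq_zero_and_lam_eq_self_of_mpLevelLE m X S β hβ hsq hind hlev
  refine ⟨fun q hq hdvd => ?_, fun g => ?_, fun i => ⟨β.isAddSubgroup_addSylow _,
    fun a ha => β.prime_nsmul_eq_zero_of_mem_addSylow hsq he (hp i) ha,
    fun a ha b hb => β.mul_eq_add_of_mem_addSylow (hlam _ (hp i)) ha hb,
    β.exists_sylow_coe_eq_addSylow (hlam _ (hp i)) (hp i)⟩⟩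
  · obtain ⟨i, -, hqi⟩ := (Prime.dvd_finsetProd_iff hq.prime _).mp
      (hcard ▸ β.dvd_of_prime_dvd_card he hq hdvd)
    exact ⟨i, ((Nat.prime_dvd_prime_iff_eq hq (hp i)).mp hqi).symm⟩
  · obtain ⟨f, hf, hg⟩ := β.exists_eq_prod_ofFn p hcop g (hcard ▸ he g)
    exact ⟨f, fun i => ⟨1, by rw [pow_one]; exact hf i⟩, hg⟩
end

section
/- Let (Y, s) be an involutive non-degenerate set-theoretic solution of the Yang–Baxter equation given by bijections σ_x (x ∈ Y), and let p be a prime. Set X = ℤ/(p) × Y and define, for (a,x), (b,y) ∈ X, σ'_{(a,x)}(b,y) = (b + δ_{x,σ_x(y)}, σ_x(y)), where δ_{u,v} ∈ ℤ/(p) equals 1 if u = v and 0 otherwise. Then each σ'_{(a,x)} is a bijection of X and the map r'((a,x),(b,y)) = (σ'_{(a,x)}(b,y), (σ'_{σ'_{(a,x)}(b,y)})⁻¹(a,x)) is an involutive non-degenerate set-theoretic solution of the Yang–Baxter equation on X; equivalently, σ'_{(a,x)} ∘ σ'_{(σ'_{(a,x)})⁻¹(b,y)} = σ'_{(b,y)}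 ∘ σ'_{(σ'_{(b,y)})⁻¹(a,x)} for all (a,x), (b,y) ∈ X. -/
open Equiv Pointwise

universe u v

/-! The permutation `σ'_{(a,x)}` depends only on `x`. Composing two of them, the second
coordinate moves by `σ_x σ_{σ_x⁻¹ y}`, as in `Y`, while the first gains `δ_{y,w} + δ_{x,w}`, where
`w` is the new second coordinate: the `δ` of the inner factor is transported by the bijection
`σ_x`. Both contributions are symmetric in `x` and `y`, so the YBE condition for `Y` lifts. -/

section ExtensionByKdelta

variable {Y : Type v}

lemma kdelta_map {α β : Type v} (q : ℕ) {f : α → β} (hf : Function.Injective f) (u w : α) :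
    kdelta q (f u) (f w) = kdelta q u w := by
  classical
  simp only [kdelta, hf.eq_iff]

noncomputable def extPerm (T : YBE Y) (q : ℕ) (x : Y) : Equiv.Perm (ZMod q × Y) where
  toFun b := (b.1 + kdelta q x (T.σ x b.2), T.σ x b.2)
  invFun c := (c.1 - kdelta q x c.2, (T.σ x).symm c.2)
  left_inv b := by simp
  right_inv c := by simp

lemma coe_extPerm (T : YBE Y) (q : ℕ) (a : ZMod q × Y) : ⇑(extPerm T q a.2) = extMap T q a :=
  rfl

lemma extPerm_mul_extPerm_apply (T : YBE Y) (q : ℕ) (x y : Y) (c : ZMod q × Y) :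
    (extPerm T q x * extPerm T q ((T.σ x)⁻¹ y)) c =
      (c.1 + kdelta q y ((T.σ x * T.σ ((T.σ x)⁻¹ y)) c.2) +
        kdelta q x ((T.σ x * T.σ ((T.σ x)⁻¹ y)) c.2),
        (T.σ x * T.σ ((T.σ x)⁻¹ y)) c.2) := by
  have hδ := kdelta_map q (T.σ x).injective ((T.σ x)⁻¹ y) (T.σ ((T.σ x)⁻¹ y) c.2)
  rw [show T.σ x ((T.σ x)⁻¹ y) = y from (T.σ x).apply_symm_apply y] at hδ
  simp only [Equiv.Perm.mul_apply, extPerm, Equiv.coe_fn_mk, ← hδ]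

noncomputable def YBE.extByKdelta (T : YBE Y) (q : ℕ) : YBE (ZMod q × Y) where
  σ a := extPerm T q a.2
  ybe a b := by
    ext1 c
    change (extPerm T q a.2 * extPerm T q ((T.σ a.2)⁻¹ b.2)) c =
      (extPerm T q b.2 * extPerm T q ((T.σ b.2)⁻¹ a.2)) c
    rw [extPerm_mul_extPerm_apply, extPerm_mul_extPerm_apply, T.ybe, add_right_comm]

end ExtensionByKdelta

theorem statement12_general {Y : Type v} (T : YBE Y) (q : ℕ) :
    (∀ a : ZMod q × Y, Function.Bijective (extMap T q a)) ∧
    ∃ S : YBE (ZMod q × Y), ∀ a b : ZMod q × Y, S.σ a b = extMap T q a b :=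
  ⟨fun a => coe_extPerm T q a ▸ (extPerm T q a.2).bijective, T.extByKdelta q, fun _ _ => rfl⟩

/-- Given a solution `(Y,s)` and a prime `q`, the maps
`σ'_{(a,x)}(b,y) = (b + δ_{x,σ_x(y)}, σ_x(y))` on `ℤ/(q) × Y` are bijections and define an
involutive non-degenerate set-theoretic solution of the YBE on `ℤ/(q) × Y`. -/
theorem statement12 {Y : Type v} (T : YBE Y) (q : ℕ) (hq : q.Prime) :
    (∀ a : ZMod q × Y, Function.Bijective (extMap T q a)) ∧
    ∃ S : YBE (ZMod q × Y), ∀ a b : ZMod q × Y, S.σ a b = extMap T q a b :=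
  statement12_general T q
end

section
/- Let (Y, s) be an involutive non-degenerate set-theoretic solution of the Yang–Baxter equation given by bijections σ_x (x ∈ Y), let p be a prime, and let (X, r') be the solution on X = ℤ/(p) × Y with σ'_{(a,x)}(b,y) = (b + δ_{x,σ_x(y)}, σ_x(y)). Then σ'_{(a,x)} = σ'_{(b,y)} if and only if x = y, and the map sending the retract class of (a,x) to x is an isomorphism of solutions Ret(X, r') ≅ (Y, s). -/
open Equiv Pointwise

universe u v

section KroneckerDelta

variable {α : Type v} (q : ℕ)

theorem kdelta_self (u : α) : kdelta q u u = 1 := by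
  simp [kdelta]

theorem kdelta_of_ne {u w : α} (h : u ≠ w) : kdelta q u w = 0 := by
  simp [kdelta, h]

end KroneckerDelta

section ExtMap

variable {Y : Type v} (T : YBE Y) (q : ℕ)

/- `σ'_{(a,x)}` detects `x`: at the point `(0, σ_x⁻¹ x)` its first coordinate is
`δ_{x,x} = 1`, whereas `σ'_{(b,y)}` with the same second coordinates there has `δ_{y,x} = 0`. -/
theorem extMap_eq_extMap_iff [Nontrivial (ZMod q)] {a b : ZMod q × Y} :
    extMap T q a = extMap T q b ↔ a.2 = b.2 := by
  refine ⟨fun h => ?_, fun h => by unfold extMap; rw [h]⟩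
  set y := (T.σ a.2)⁻¹ a.2
  have hy : T.σ a.2 y = a.2 := (T.σ a.2).apply_symm_apply a.2
  have hfst := congrArg Prod.fst (congrFun h (0, y))
  have hsnd : T.σ b.2 y = a.2 := hy ▸ (congrArg Prod.snd (congrFun h (0, y))).symm
  simp only [extMap, hy, hsnd, zero_add, kdelta_self] at hfst
  by_contra hne
  rw [kdelta_of_ne q (Ne.symm hne)] at hfst
  exact one_ne_zero hfst

end ExtMap

/-- For the extension solution on `ℤ/(q) × Y` built from a solution `(Y,s)`:
`σ'_{(a,x)} = σ'_{(b,y)}` iff `x = y`, and the second projection realizes an isomorphism of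
solutions `Ret(ℤ/(q) × Y, r') ≅ (Y,s)` (it is a surjective homomorphism of solutions whose
fibers are exactly the retract classes). -/
theorem statement13 {Y : Type v} (T : YBE Y) (q : ℕ) (hq : q.Prime)
    (S : YBE (ZMod q × Y)) (hS : ∀ a b : ZMod q × Y, S.σ a b = extMap T q a b) :
    (∀ a b : ZMod q × Y, S.σ a = S.σ b ↔ a.2 = b.2) ∧
    Function.Surjective (Prod.snd : ZMod q × Y → Y) ∧
    S.IsHom T Prod.snd ∧
    ∀ a b : ZMod q × Y, Prod.snd a = Prod.snd b ↔ S.σ a = S.σ b := by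
  have : Fact q.Prime := ⟨hq⟩
  have hσ : ∀ a, ⇑(S.σ a) = extMap T q a := fun a => funext (hS a)
  have hfibers : ∀ a b : ZMod q × Y, S.σ a = S.σ b ↔ a.2 = b.2 := fun a b => by
    rw [← DFunLike.coe_fn_eq, hσ, hσ, extMap_eq_extMap_iff]
  exact ⟨hfibers, Prod.snd_surjective, fun a b => by rw [hS]; rfl,
    fun a b => (hfibers a b).symm⟩
end

section
/- Let p_1, p_2, p_3 be three distinct prime numbers and let (X, r) be an indecomposable involutive non-degenerate set-theoretic solution of the Yang–Baxter equation with |X| = p_1p_2p_3 which is a multipermutation solution of multipermutation level 3. Then |𝒢(X,r)| > p_1p_2p_3. -/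
open Equiv Pointwise

universe u v

/-!
Inside `𝒢 = 𝒢(X,r)` the right translations `g ↦ g σ_{g⁻¹ z}` commute (this is exactly the
identity `σ_x σ_{σ_x⁻¹ y} = σ_y σ_{σ_y⁻¹ x}`), and for finite `X` the monoid they generate acts
regularly on `𝒢`; transporting it along evaluation at `1` gives the additive group of the left
brace `𝒢`, with `λ_a(x) = -a + a x` and `λ_a(σ_y) = σ_{a y}`.

Transitivity gives `|𝒢| ≥ |X|`. If equality held, `|𝒢| = p₁p₂p₃` would be squarefree, so the
additive group would be cyclic, the `λ_a` would commute and `𝒢(Ret X)` would be abelian.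
Then `𝒢(Ret X)` and `𝒢(Ret² X)` are abelian and transitive, hence regular, and level 3 makes
`|X| > |Ret X| > |Ret² X| > 1` a chain of divisors, so `|Ret² X| = [𝒢(Ret X) : ker λ]` is prime.
This is impossible in an abelian brace of squarefree order.
-/

open scoped IsMulCommutative

theorem smul_eq_smul_of_isMulCommutative {M α : Type*} [Monoid M] [IsMulCommutative M]
    [MulAction M α] {a : α} (htrans : ∀ b : α, ∃ n : M, n • a = b) {m m' : M}
    (h : m • a = m' • a) (b : α) : m • b = m' • b := by
  obtain ⟨n, rfl⟩ := htrans b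
  rw [smul_smul, mul_comm, mul_smul, h, ← mul_smul, mul_comm, mul_smul]

theorem isAddCyclic_of_squarefree_card {A : Type*} [AddCommGroup A] [Finite A]
    (h : Squarefree (Nat.card A)) : IsAddCyclic A := by
  have : IsZGroup (Multiplicative A) := IsZGroup.of_squarefree h
  exact isCyclic_multiplicative_iff.mp inferInstance

theorem AddMonoidHom.comm_of_isAddCyclic {A : Type*} [AddGroup A] [IsAddCyclic A]
    (f g : A →+ A) (x : A) : f (g x) = g (f x) := by
  obtain ⟨m, hm⟩ := f.map_addCyclic
  obtain ⟨n, hn⟩ := g.map_addCyclic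
  rw [hm, hn, hn, hm, smul_smul, smul_smul, mul_comm]

theorem Nat.squarefree_prod_of_prime {ι : Type*} (s : Finset ι) {p : ι → ℕ}
    (hp : ∀ i, (p i).Prime) (hinj : Function.Injective p) : Squarefree (∏ i ∈ s, p i) :=
  Finset.squarefree_prod_of_pairwise_isCoprime
    (fun i _ j _ hij => Nat.coprime_iff_isRelPrime.mp
      ((Nat.coprime_primes (hp i) (hp j)).mpr (hinj.ne hij)))
    fun i _ => (hp i).squarefree

namespace ArithmeticFunction

theorem cardFactors_prod_of_prime {ι : Type*} (s : Finset ι) {p : ι → ℕ}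
    (hp : ∀ i, (p i).Prime) : cardFactors (∏ i ∈ s, p i) = s.card := by
  induction s using Finset.cons_induction with
  | empty => simp
  | cons i s _ ih =>
    rw [Finset.prod_cons, cardFactors_mul (hp i).ne_zero
      (Finset.prod_ne_zero_iff.mpr fun j _ => (hp j).ne_zero), cardFactors_apply_prime (hp i),
      ih, Finset.card_cons, add_comm]

theorem cardFactors_lt_of_dvd_of_ne {a b : ℕ} (hb : b ≠ 0) (hab : a ∣ b) (hne : a ≠ b) :
    cardFactors a < cardFactors b := by
  obtain ⟨c, rfl⟩ := hab
  have hc : 1 < c := by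
    rcases Nat.lt_trichotomy c 1 with h | rfl | h
    · simp_all
    · simp at hne
    · exact h
  rw [cardFactors_mul (left_ne_zero_of_mul hb) (right_ne_zero_of_mul hb)]
  have := cardFactors_pos_iff_one_lt.mpr hc
  omega

theorem prime_of_dvd_of_dvd_of_cardFactors_eq_three {a b c : ℕ} (hc : cardFactors c = 3)
    (hab : a ∣ b) (hbc : b ∣ c) (ha : a ≠ 1) (hab' : a ≠ b) (hbc' : b ≠ c) : a.Prime := by
  have hc0 : c ≠ 0 := by rintro rfl; simp at hc
  have hb0 : b ≠ 0 := by rintro rfl; exact hc0 (zero_dvd_iff.mp hbc)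
  have ha0 : a ≠ 0 := by rintro rfl; exact hb0 (zero_dvd_iff.mp hab)
  have h1 := cardFactors_lt_of_dvd_of_ne hc0 hbc hbc'
  have h2 := cardFactors_lt_of_dvd_of_ne hb0 hab hab'
  have h3 := cardFactors_pos_iff_one_lt.mpr (by omega : 1 < a)
  exact cardFactors_eq_one_iff_prime.mp (by omega)

end ArithmeticFunction

namespace YBE

section Brace

variable {X : Type u} (S : YBE X)

theorem σg_apply (x y : X) : (S.σg x : Equiv.Perm X) y = S.σ x y := rfl

def rightTranslate (z : X) : Function.End S.permGroup :=
  fun g => g * S.σg ((g : Equiv.Perm X)⁻¹ z)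

theorem mul_σg_eq_rightTranslate (g : S.permGroup) (y : X) :
    g * S.σg y = S.rightTranslate ((g : Equiv.Perm X) y) g := by
  simp [rightTranslate]

theorem rightTranslate_one (z : X) : S.rightTranslate z 1 = S.σg z := by
  simp [rightTranslate]

theorem rightTranslate_comm (z w : X) :
    S.rightTranslate z * S.rightTranslate w = S.rightTranslate w * S.rightTranslate z := by
  funext g
  change S.rightTranslate z (S.rightTranslate w g) = S.rightTranslate w (S.rightTranslate z g)
  simp only [rightTranslate, Subgroup.coe_mul, mul_inv_rev, Equiv.Perm.mul_apply, mul_assoc]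
  exact congrArg (g * ·) (Subtype.ext (S.ybe _ _))

def translations : Submonoid (Function.End S.permGroup) :=
  Submonoid.closure (Set.range S.rightTranslate)

instance : IsMulCommutative S.translations :=
  Submonoid.isMulCommutative_closure _ (by
    rintro _ ⟨z, rfl⟩ _ ⟨w, rfl⟩
    exact S.rightTranslate_comm z w)

instance : Zero S.permGroup := ⟨1⟩

theorem zero_eq_one : (0 : S.permGroup) = 1 := rfl

variable [Finite X]

theorem submonoid_closure_range_σg : Submonoid.closure (Set.range S.σg) = ⊤ := by
  have hrange : Set.range S.σg = Subtype.val ⁻¹' Set.range S.σ := by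
    ext g
    exact ⟨by rintro ⟨x, rfl⟩; exact ⟨x, rfl⟩, fun ⟨x, hx⟩ => ⟨x, Subtype.ext hx⟩⟩
  rw [← Subgroup.closure_toSubmonoid_of_finite, hrange, ← Subgroup.top_toSubmonoid]
  exact congrArg Subgroup.toSubmonoid Subgroup.closure_closure_coe_preimage

theorem exists_mem_translations_apply_eq (g₀ g : S.permGroup) :
    ∃ m ∈ S.translations, m g₀ = g := by
  suffices h : ∀ a ∈ Submonoid.closure (Set.range S.σg), ∃ m ∈ S.translations, m g₀ = g₀ * a by
    simpa using h (g₀⁻¹ * g) (S.submonoid_closure_range_σg ▸ Submonoid.mem_top _)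
  intro a ha
  induction ha using Submonoid.closure_induction_right with
  | one => exact ⟨1, one_mem _, (mul_one g₀).symm⟩
  | mul_right a _ _ hσ ih =>
    obtain ⟨y, rfl⟩ := hσ
    obtain ⟨m, hm, hmg⟩ := ih
    refine ⟨S.rightTranslate (((g₀ * a : S.permGroup) : Equiv.Perm X) y) * m,
      mul_mem (Submonoid.subset_closure ⟨_, rfl⟩) hm, ?_⟩
    rw [← mul_assoc, S.mul_σg_eq_rightTranslate, ← hmg]
    rfl

theorem translations_ext {m m' : Function.End S.permGroup} (hm : m ∈ S.translations)
    (hm' : m' ∈ S.translations) (g₀ : S.permGroup) (h : m g₀ = m' g₀) : m = m' := by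
  funext g
  refine smul_eq_smul_of_isMulCommutative (M := S.translations) (a := g₀) (fun b => ?_)
    (m := ⟨m, hm⟩) (m' := ⟨m', hm'⟩) h g
  obtain ⟨n, hn, hb⟩ := S.exists_mem_translations_apply_eq g₀ b
  exact ⟨⟨n, hn⟩, hb⟩

noncomputable def translationTo (a : S.permGroup) : Function.End S.permGroup :=
  (S.exists_mem_translations_apply_eq 1 a).choose

theorem translationTo_mem (a : S.permGroup) : S.translationTo a ∈ S.translations :=
  (S.exists_mem_translations_apply_eq 1 a).choose_spec.1

theorem translationTo_apply_one (a : S.permGroup) : S.translationTo a 1 = a :=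
  (S.exists_mem_translations_apply_eq 1 a).choose_spec.2

theorem translationTo_apply_one_eq {m : Function.End S.permGroup} (hm : m ∈ S.translations) :
    S.translationTo (m 1) = m :=
  S.translations_ext (S.translationTo_mem _) hm 1 (S.translationTo_apply_one _)

theorem translationTo_mul (a b : S.permGroup) :
    S.translationTo (S.translationTo a b) = S.translationTo a * S.translationTo b := by
  conv_lhs => rw [← S.translationTo_apply_one b]
  exact S.translationTo_apply_one_eq (mul_mem (S.translationTo_mem a) (S.translationTo_mem b))

noncomputable instance : Add S.permGroup := ⟨fun a b => S.translationTo a b⟩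

noncomputable instance : Neg S.permGroup :=
  ⟨fun a => (S.exists_mem_translations_apply_eq a 1).choose 1⟩

noncomputable instance : AddCommGroup S.permGroup where
  add_assoc a b c := by
    change S.translationTo (S.translationTo a b) c = S.translationTo a (S.translationTo b c)
    rw [S.translationTo_mul]
    rfl
  zero_add a := by
    change S.translationTo 1 a = a
    rw [show S.translationTo 1 = 1 from S.translationTo_apply_one_eq (m := 1) (one_mem _)]
    rfl
  add_zero a := S.translationTo_apply_one a
  add_comm a b := by
    change S.translationTo a b = S.translationTo b a
    conv_lhs => rw [← S.translationTo_apply_one b]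
    conv_rhs => rw [← S.translationTo_apply_one a]
    exact congrArg (· 1) (congrArg Subtype.val
      (mul_comm (⟨_, S.translationTo_mem a⟩ : S.translations) ⟨_, S.translationTo_mem b⟩))
  neg_add_cancel a := by
    obtain ⟨hm, hma⟩ := (S.exists_mem_translations_apply_eq a 1).choose_spec
    change S.translationTo ((S.exists_mem_translations_apply_eq a 1).choose 1) a = 1
    rwa [S.translationTo_apply_one_eq hm]
  nsmul := nsmulRec
  zsmul := zsmulRec

theorem apply_one_add_of_mem_translations {m : Function.End S.permGroup}
    (hm : m ∈ S.translations) (b : S.permGroup) : m 1 + b = m b := by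
  change S.translationTo (m 1) b = m b
  rw [S.translationTo_apply_one_eq hm]

theorem σg_add (z : X) (c : S.permGroup) : S.σg z + c = S.rightTranslate z c := by
  rw [← S.rightTranslate_one,
    S.apply_one_add_of_mem_translations (Submonoid.subset_closure ⟨z, rfl⟩)]

theorem mul_σg (g : S.permGroup) (y : X) : g * S.σg y = S.σg ((g : Equiv.Perm X) y) + g := by
  rw [S.σg_add, S.mul_σg_eq_rightTranslate]

theorem addSubmonoid_closure_range_σg : AddSubmonoid.closure (Set.range S.σg) = ⊤ := by
  refine (AddSubmonoid.eq_top_iff' _).mpr fun g => ?_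
  obtain ⟨m, hm, rfl⟩ := S.exists_mem_translations_apply_eq 1 g
  induction hm using Submonoid.closure_induction with
  | mem m hm =>
    obtain ⟨z, rfl⟩ := hm
    exact S.rightTranslate_one z ▸ AddSubmonoid.subset_closure ⟨z, rfl⟩
  | one => exact zero_mem _
  | mul m n hm _ ihm ihn =>
    change m (n 1) ∈ _
    rw [← S.apply_one_add_of_mem_translations hm]
    exact add_mem ihm ihn

end Brace

section Lambda

variable {X : Type u} (S : YBE X) [Finite X]

noncomputable def lam (a x : S.permGroup) : S.permGroup := -a + a * x

theorem mul_eq_add_lam (a x : S.permGroup) : a * x = a + S.lam a x :=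
  (add_neg_cancel_left a (a * x)).symm

theorem lam_σg (a : S.permGroup) (y : X) : S.lam a (S.σg y) = S.σg ((a : Equiv.Perm X) y) := by
  rw [lam, S.mul_σg, add_comm _ a, neg_add_cancel_left]

theorem lam_one (x : S.permGroup) : S.lam 1 x = x := by
  rw [lam, one_mul, ← S.zero_eq_one, neg_zero, zero_add]

theorem lam_zero (a : S.permGroup) : S.lam a 0 = 0 := by
  change -a + a * 1 = 0
  rw [mul_one, neg_add_cancel]

theorem lam_add (a b c : S.permGroup) : S.lam a (b + c) = S.lam a b + S.lam a c := by
  have hb : b ∈ AddSubmonoid.closure (Set.range S.σg) := S.addSubmonoid_closure_range_σg ▸ trivial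
  induction hb using AddSubmonoid.closure_induction generalizing c with
  | mem b hb =>
    obtain ⟨z, rfl⟩ := hb
    rw [S.σg_add, S.lam_σg, lam, lam, rightTranslate, ← mul_assoc, S.mul_σg]
    simp only [Subgroup.coe_mul, Equiv.Perm.mul_apply, Equiv.Perm.coe_inv, Equiv.apply_symm_apply]
    abel
  | zero => rw [zero_add, S.lam_zero, zero_add]
  | add b b' _ _ ihb ihb' => rw [add_assoc, ihb, ihb', ihb, add_assoc]

theorem lam_mul (a b x : S.permGroup) : S.lam (a * b) x = S.lam a (S.lam b x) := by
  have h := mul_assoc a b x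
  simp only [S.mul_eq_add_lam, S.lam_add, add_assoc] at h
  rw [S.mul_eq_add_lam a b]
  exact add_left_cancel (add_left_cancel h)

noncomputable def lamAddHom (a : S.permGroup) : S.permGroup →+ S.permGroup :=
  AddMonoidHom.mk' (S.lam a) (S.lam_add a)

noncomputable def lamHom : S.permGroup →* Equiv.Perm S.permGroup where
  toFun a :=
    { toFun := S.lam a
      invFun := S.lam a⁻¹
      left_inv := fun x => by rw [← S.lam_mul, inv_mul_cancel, S.lam_one]
      right_inv := fun x => by rw [← S.lam_mul, mul_inv_cancel, S.lam_one] }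
  map_one' := Equiv.ext S.lam_one
  map_mul' a b := Equiv.ext (S.lam_mul a b)

theorem lam_eq_self_of_mem_ker {k : S.permGroup} (hk : k ∈ S.lamHom.ker) (x : S.permGroup) :
    S.lam k x = x :=
  Equiv.ext_iff.mp hk x

theorem mem_ker_lamHom_iff (a : S.permGroup) :
    a ∈ S.lamHom.ker ↔ ∀ y, S.σ ((a : Equiv.Perm X) y) = S.σ y := by
  refine ⟨fun ha y => ?_, fun ha => ?_⟩
  · exact congrArg Subtype.val ((S.lam_σg a y).symm.trans (S.lam_eq_self_of_mem_ker ha _))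
  · have h : S.lamAddHom a = AddMonoidHom.id _ := by
      refine AddMonoidHom.eq_of_eqOn_denseM S.addSubmonoid_closure_range_σg ?_
      rintro _ ⟨y, rfl⟩
      exact (S.lam_σg a y).trans (Subtype.ext (ha y))
    exact MonoidHom.mem_ker.mpr (Equiv.ext fun x => DFunLike.congr_fun h x)

theorem σ_apply_apply_comm (hsq : Squarefree (Nat.card S.permGroup)) (a b : S.permGroup)
    (x : X) : S.σ ((a : Equiv.Perm X) ((b : Equiv.Perm X) x)) =
      S.σ ((b : Equiv.Perm X) ((a : Equiv.Perm X) x)) := by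
  have := isAddCyclic_of_squarefree_card hsq
  have h := (S.lamAddHom a).comm_of_isAddCyclic (S.lamAddHom b) (S.σg x)
  simp only [lamAddHom, AddMonoidHom.mk'_apply, lam_σg] at h
  exact congrArg Subtype.val h

theorem add_eq_mul_of_mem_ker {k : S.permGroup} (hk : k ∈ S.lamHom.ker) (x : S.permGroup) :
    k + x = k * x := by
  rw [S.mul_eq_add_lam, S.lam_eq_self_of_mem_ker hk]

/-- `ker λ`, closed under `+` because `+` and `∘` agree on it. -/
noncomputable def kerLamAddSubgroup : AddSubgroup S.permGroup where
  carrier := S.lamHom.ker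
  add_mem' {a b} ha hb := (S.add_eq_mul_of_mem_ker ha b).symm ▸ mul_mem ha hb
  zero_mem' := one_mem _
  neg_mem' {a} ha := by
    have h : a + a⁻¹ = 0 := by rw [S.add_eq_mul_of_mem_ker ha, mul_inv_cancel]; rfl
    exact neg_eq_of_add_eq_zero_right h ▸ inv_mem ha

noncomputable def lamFixed : AddSubgroup S.permGroup where
  carrier := {x | ∀ a, S.lam a x = x}
  add_mem' hx hy a := by rw [S.lam_add, hx a, hy a]
  zero_mem' := S.lam_zero
  neg_mem' {x} hx a := by
    change S.lamAddHom a (-x) = -x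
    rw [map_neg]
    exact congrArg Neg.neg (hx a)

theorem lam_eq_self_of_mem_ker_of_isMulCommutative [IsMulCommutative S.permGroup]
    {k : S.permGroup} (hk : k ∈ S.lamHom.ker) (a : S.permGroup) : S.lam a k = k := by
  have h := S.mul_eq_add_lam a k
  rw [mul_comm, ← S.add_eq_mul_of_mem_ker hk, add_comm] at h
  exact (add_left_cancel h).symm

/-- The image of `λ` has prime order `q = [𝒢 : ker λ]` and fixes `ker λ` pointwise, so its
common fixed points form an additive subgroup whose order is divisible by `q` and by the coprime
`|ker λ|`: it is everything, and `λ` is trivial. -/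
theorem not_prime_index_ker_lamHom [IsMulCommutative S.permGroup]
    (hsq : Squarefree (Nat.card S.permGroup)) : ¬ S.lamHom.ker.index.Prime := by
  intro hq
  have := Fact.mk hq
  set q := S.lamHom.ker.index
  have hcard := S.lamHom.ker.card_mul_index
  have hqF : q ∣ Nat.card S.lamFixed := by
    have hR : IsPGroup q S.lamHom.range :=
      IsPGroup.of_card (n := 1) (by rw [pow_one, ← Subgroup.index_ker])
    have hfix : MulAction.fixedPoints S.lamHom.range S.permGroup = S.lamFixed := by
      ext x
      exact ⟨fun hx a => hx ⟨_, a, rfl⟩, by rintro hx ⟨_, a, rfl⟩; exact hx a⟩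
    have hmod := hR.card_modEq_card_fixedPoints S.permGroup
    rw [hfix] at hmod
    exact Nat.modEq_zero_iff_dvd.mp
      (hmod.symm.trans (Nat.modEq_zero_iff_dvd.mpr S.lamHom.ker.index_dvd_card))
  have hkerF : Nat.card S.lamHom.ker ∣ Nat.card S.lamFixed :=
    AddSubgroup.card_dvd_of_le (H := S.kerLamAddSubgroup) fun k hk a =>
      S.lam_eq_self_of_mem_ker_of_isMulCommutative hk a
  have hcop : (Nat.card S.lamHom.ker).Coprime q :=
    (Nat.squarefree_mul_iff.mp (hcard ▸ hsq)).1
  have hF : S.lamFixed = ⊤ := AddSubgroup.eq_top_of_card_eq _ (Nat.dvd_antisymm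
    (AddSubgroup.card_addSubgroup_dvd_card _) (hcard ▸ hcop.mul_dvd_of_dvd_of_dvd hkerF hqF))
  have hker : S.lamHom.ker = ⊤ := eq_top_iff.mpr fun a _ =>
    MonoidHom.mem_ker.mpr (Equiv.ext fun x => (hF ▸ AddSubgroup.mem_top x : x ∈ S.lamFixed) a)
  exact Nat.not_prime_one (Subgroup.index_eq_one.mpr hker ▸ hq)

end Lambda

section Retract

variable {X : Type u} {Y : Type v} {S : YBE X}

theorem IsHom.exists_permGroup_hom {T : YBE Y} {f : X → Y} (hf : Function.Surjective f)
    (hhom : S.IsHom T f) : ∃ π : S.permGroup →* T.permGroup, Function.Surjective π ∧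
      ∀ g x, (π g : Equiv.Perm Y) (f x) = f ((g : Equiv.Perm X) x) := by
  have hext : ∀ h h' : Equiv.Perm Y, (∀ x, h (f x) = h' (f x)) → h = h' :=
    fun h h' H => Equiv.ext (hf.forall.mpr H)
  have hdesc : ∀ g ∈ S.permGroup, ∃ h ∈ T.permGroup, ∀ x, h (f x) = f (g x) := by
    intro g hg
    induction hg using Subgroup.closure_induction with
    | mem g hg =>
      obtain ⟨x₀, rfl⟩ := hg
      exact ⟨T.σ (f x₀), Subgroup.subset_closure ⟨_, rfl⟩, fun x => (hhom x₀ x).symm⟩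
    | one => exact ⟨1, one_mem _, fun x => rfl⟩
    | mul g g' _ _ ih ih' =>
      obtain ⟨h, hh, hhf⟩ := ih
      obtain ⟨h', hh', hhf'⟩ := ih'
      exact ⟨h * h', mul_mem hh hh', fun x => by simp [hhf, hhf']⟩
    | inv g _ ih =>
      obtain ⟨h, hh, hhf⟩ := ih
      refine ⟨h⁻¹, inv_mem hh, fun x => h.injective ?_⟩
      simp [hhf]
  choose Φ hΦmem hΦ using fun g : S.permGroup => hdesc g g.2
  let π : S.permGroup →* T.permGroup :=
    { toFun g := ⟨Φ g, hΦmem g⟩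
      map_one' := Subtype.ext (hext _ _ fun x => hΦ 1 x)
      map_mul' g g' := Subtype.ext (hext _ _ fun x => by simp [hΦ]) }
  refine ⟨π, ?_, hΦ⟩
  have htop : Subgroup.closure (Subtype.val ⁻¹' Set.range T.σ : Set T.permGroup) = ⊤ :=
    Subgroup.closure_closure_coe_preimage
  rw [← MonoidHom.range_eq_top, eq_top_iff, ← htop, Subgroup.closure_le]
  rintro h ⟨z, hz⟩
  obtain ⟨x₀, rfl⟩ := hf z
  exact ⟨S.σg x₀, Subtype.ext (hext _ _ fun x => by simp [π, hΦ, hz, σg_apply, hhom x₀ x])⟩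

theorem IsRetract.exists_permGroup_hom {T : YBE Y} (h : S.IsRetract T) :
    ∃ π : S.permGroup →* T.permGroup, Function.Surjective π ∧
      ∀ g, π g = 1 ↔ ∀ x, S.σ ((g : Equiv.Perm X) x) = S.σ x := by
  obtain ⟨f, hf, hhom, hiff⟩ := h
  obtain ⟨π, hπ, hπf⟩ := hhom.exists_permGroup_hom hf
  refine ⟨π, hπ, fun g => ⟨fun hg x => (hiff _ _).mp ?_, fun hg => ?_⟩⟩
  · rw [← hπf, hg]
    rfl
  · exact Subtype.ext (Equiv.ext (hf.forall.mpr fun x => by rw [hπf, (hiff _ _).mpr (hg x)]; rfl))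

theorem IsRetract.indecomposable {T : YBE Y} (h : S.IsRetract T) (hind : S.Indecomposable) :
    T.Indecomposable := by
  obtain ⟨f, hf, hhom, -⟩ := h
  obtain ⟨π, -, hπf⟩ := hhom.exists_permGroup_hom hf
  intro z z'
  obtain ⟨x, rfl⟩ := hf z
  obtain ⟨x', rfl⟩ := hf z'
  obtain ⟨g, hg, rfl⟩ := hind x x'
  exact ⟨π ⟨g, hg⟩, (π _).2, hπf _ x⟩

theorem IsRetract.card_permGroup_dvd {T : YBE Y} (h : S.IsRetract T) :
    Nat.card T.permGroup ∣ Nat.card S.permGroup :=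
  let ⟨π, hπ, _⟩ := h.exists_permGroup_hom
  Subgroup.card_dvd_of_surjective π hπ

theorem IsRetract.card_permGroup_eq_index [Finite X] {T : YBE Y} (h : S.IsRetract T) :
    Nat.card T.permGroup = S.lamHom.ker.index := by
  obtain ⟨π, hπ, hπker⟩ := h.exists_permGroup_hom
  have hker : π.ker = S.lamHom.ker := by
    ext g
    rw [S.mem_ker_lamHom_iff, MonoidHom.mem_ker, hπker]
  rw [← hker, Subgroup.index_ker, MonoidHom.range_eq_top.mpr hπ, Subgroup.card_top]

theorem IsRetract.isMulCommutative [Finite X] {T : YBE Y} (h : S.IsRetract T)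
    (hsq : Squarefree (Nat.card S.permGroup)) : IsMulCommutative T.permGroup := by
  obtain ⟨f, hf, hhom, hiff⟩ := h
  refine Subgroup.isMulCommutative_closure ?_
  rintro _ ⟨z₁, rfl⟩ _ ⟨z₂, rfl⟩
  obtain ⟨x₁, rfl⟩ := hf z₁
  obtain ⟨x₂, rfl⟩ := hf z₂
  refine Equiv.ext (hf.forall.mpr fun x => ?_)
  rw [Equiv.Perm.mul_apply, Equiv.Perm.mul_apply, ← hhom x₂ x, ← hhom x₁, ← hhom x₁ x, ← hhom x₂]
  exact (hiff _ _).mpr (S.σ_apply_apply_comm hsq (S.σg x₁) (S.σg x₂) x)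

theorem IsRetract.finite [Finite X] {T : YBE Y} (h : S.IsRetract T) : Finite Y :=
  let ⟨f, hf, _⟩ := h
  Finite.of_surjective f hf

theorem IsRetract.nonempty [Nonempty X] {T : YBE Y} (h : S.IsRetract T) : Nonempty Y :=
  let ⟨f, _⟩ := h
  ‹Nonempty X›.map f

variable (S)

theorem card_le_card_permGroup [Finite X] [Nonempty X] (hind : S.Indecomposable) :
    Nat.card X ≤ Nat.card S.permGroup := by
  obtain ⟨x₀⟩ := ‹Nonempty X›
  refine Nat.card_le_card_of_surjective (fun g : S.permGroup => (g : Equiv.Perm X) x₀) fun y => ?_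
  obtain ⟨g, hg, rfl⟩ := hind x₀ y
  exact ⟨⟨g, hg⟩, rfl⟩

theorem card_permGroup_eq_of_isMulCommutative [Nonempty X] [IsMulCommutative S.permGroup]
    (hind : S.Indecomposable) : Nat.card S.permGroup = Nat.card X := by
  obtain ⟨x₀⟩ := ‹Nonempty X›
  have htrans : ∀ y, ∃ g : S.permGroup, g • x₀ = y := fun y =>
    let ⟨g, hg, hgy⟩ := hind x₀ y
    ⟨⟨g, hg⟩, hgy⟩
  refine Nat.card_eq_of_bijective (fun g : S.permGroup => g • x₀) ⟨fun g g' h => ?_, htrans⟩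
  exact Subtype.ext (Equiv.ext (smul_eq_smul_of_isMulCommutative htrans h))

end Retract

section Level

variable {X : Type u} {S : YBE X}

theorem MPLevelLE.of_bijective_hom {Y : Type u} {T : YBE Y} {f : X → Y}
    (hf : Function.Bijective f) (hhom : S.IsHom T f) {n : ℕ} (h : MPLevelLE (n + 1) Y T) :
    MPLevelLE (n + 1) X S := by
  obtain ⟨Z, U, ⟨g, hg, hghom, hgiff⟩, hZ⟩ := h
  refine ⟨Z, U, ⟨g ∘ f, hg.comp hf.surjective, fun x y => ?_, fun x x' => ?_⟩, hZ⟩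
  · change g (f (S.σ x y)) = U.σ (g (f x)) (g (f y))
    rw [hhom x y, hghom]
  · have hσ : T.σ (f x) = T.σ (f x') ↔ S.σ x = S.σ x' := by
      simp only [Equiv.ext_iff, hf.surjective.forall]
      exact forall_congr' fun y => by rw [← hhom x y, ← hhom x' y, hf.injective.eq_iff]
    rw [Function.comp_apply, Function.comp_apply, hgiff, hσ]

theorem IsRetract.card_ne [Finite X] {Y : Type u} {T : YBE Y} (hST : S.IsRetract T) {n : ℕ}
    (hT : MPLevelLE (n + 1) Y T) (hS : ¬ MPLevelLE (n + 1) X S) : Nat.card Y ≠ Nat.card X := by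
  obtain ⟨f, hf, hhom, -⟩ := hST
  exact fun h => hS (hT.of_bijective_hom
    ((Nat.bijective_iff_surjective_and_card f).mpr ⟨hf, h.symm⟩) hhom)

theorem MPLevelExact.exists_isRetract_isRetract [Finite X] (h : S.MPLevelExact 3) :
    ∃ (Y Z : Type u) (T : YBE Y) (U : YBE Z), S.IsRetract T ∧ T.IsRetract U ∧
      Nat.card Y ≠ Nat.card X ∧ Nat.card Z ≠ Nat.card Y ∧ Nat.card Z ≠ 1 := by
  obtain ⟨-, ⟨Y, T, hST, Z, U, hTU, hU⟩, hmin⟩ := h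
  have hS : ¬ MPLevelLE 2 X S := fun h2 => absurd (hmin 2 two_pos h2) (by norm_num)
  have hT : ¬ MPLevelLE 1 Y T := fun h1 => hS ⟨Y, T, hST, h1⟩
  have := hST.finite
  refine ⟨Y, Z, T, U, hST, hTU, hST.card_ne ⟨Z, U, hTU, hU⟩ hS, hTU.card_ne hU hT, fun h1 => ?_⟩
  obtain ⟨_, _⟩ := Nat.card_eq_one_iff_unique.mp h1
  exact hT ⟨Z, U, hTU, ⟨‹_›, ‹_›⟩⟩

end Level

end YBE

open ArithmeticFunction in
/-- An indecomposable solution of cardinality `p₁p₂p₃` (three distinct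
primes) of multipermutation level `3` has `|𝒢(X,r)| > p₁p₂p₃`. -/
theorem statement15 {X : Type u} (p : Fin 3 → ℕ)
    (hp : ∀ i, Nat.Prime (p i)) (hinj : Function.Injective p)
    (S : YBE X) (hcard : Nat.card X = Finset.univ.prod p)
    (hind : S.Indecomposable) (hlev : S.MPLevelExact 3) :
    Finset.univ.prod p < Nat.card ↥S.permGroup := by
  have hsq := Nat.squarefree_prod_of_prime Finset.univ hp hinj
  have : Finite X := Nat.finite_of_card_ne_zero (hcard ▸ hsq.ne_zero)
  have : Nonempty X := (Nat.card_pos_iff.mp (hcard ▸ Nat.pos_of_ne_zero hsq.ne_zero)).1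
  refine lt_of_le_of_ne (hcard ▸ S.card_le_card_permGroup hind) fun hG => ?_
  obtain ⟨Y, Z, T, U, hST, hTU, hYX, hZY, hZ⟩ := hlev.exists_isRetract_isRetract
  have := hST.finite
  have := hST.nonempty
  have := hTU.nonempty
  have hsqS : Squarefree (Nat.card S.permGroup) := hG ▸ hsq
  have hsqT := hsqS.squarefree_of_dvd hST.card_permGroup_dvd
  have := hST.isMulCommutative hsqS
  have := hTU.isMulCommutative hsqT
  have hindT := hST.indecomposable hind
  have hcardY := T.card_permGroup_eq_of_isMulCommutative hindT
  have hcardZ := U.card_permGroup_eq_of_isMulCommutative (hTU.indecomposable hindT)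
  have hΩ : cardFactors (Nat.card X) = 3 := by rw [hcard, cardFactors_prod_of_prime _ hp]; rfl
  have hZY' : Nat.card Z ∣ Nat.card Y := hcardY ▸ hcardZ ▸ hTU.card_permGroup_dvd
  have hYX' : Nat.card Y ∣ Nat.card X := hcard ▸ hG ▸ hcardY ▸ hST.card_permGroup_dvd
  have hprime := prime_of_dvd_of_dvd_of_cardFactors_eq_three hΩ hZY' hYX' hZ hZY hYX
  exact T.not_prime_index_ker_lamHom hsqT (hTU.card_permGroup_eq_index ▸ hcardZ ▸ hprime)
end

section
/- Let B be a left brace, I an ideal of B and L a left ideal of B such that I ∩ L = {1} and B = IL (every element of B is a product a∘b with a ∈ I, b ∈ L). Then for all a ∈ I and b ∈ L: λ_a(b) = b, λ_b(a) = b∘a∘b⁻¹, and a∘b = a + b. Consequently, the multiplicative group of B is the inner semidirect product of the multiplicative groups of I and L, and for all a_1, a_2 ∈ I and b_1, b_2 ∈ L one has a_1∘b_1 + a_2∘b_2 = (a_1 + a_2)∘(b_1 + b_2). -/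
open Equiv Pointwise

universe u v

/-- The additive group of a left brace, as an `AddCommGroup` structure on the carrier. -/
def BraceOps.toAdd {B : Type u} [Group B] (β : BraceOps B) : AddCommGroup B :=
  letI : Zero B := ⟨1⟩
  letI : Add B := ⟨β.add⟩
  letI : Neg B := ⟨β.neg⟩
  { add := β.add
    add_assoc := β.add_assoc
    zero := 1
    zero_add := β.zero_add
    add_zero := fun a => (β.add_comm a 1).trans (β.zero_add a)
    neg := β.neg
    neg_add_cancel := β.neg_add_cancel
    add_comm := β.add_comm
    nsmul := nsmulRec
    zsmul := zsmulRec }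

/-- If `B` is a left brace, `I` an ideal and `L` a left ideal with
`I ∩ L = {1}` and `B = IL`, then `λ_a(b) = b`, `λ_b(a) = b∘a∘b⁻¹` and `a∘b = a + b` for
`a ∈ I`, `b ∈ L`; consequently the multiplicative group of `B` is the inner semidirect
product of `I` and `L` (L is a subgroup and decompositions are unique), and
`a₁∘b₁ + a₂∘b₂ = (a₁+a₂)∘(b₁+b₂)`. -/
theorem statement17 {B : Type u} [Group B] (β : BraceOps B) (I L : Set B)
    (hI : β.IsIdeal I) (hL : β.IsLeftIdeal L)
    (hIL : I ∩ L = {1}) (hB : ∀ g : B, ∃ a ∈ I, ∃ b ∈ L, g = a * b) :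
    (∀ a ∈ I, ∀ b ∈ L,
      β.lam a b = b ∧ β.lam b a = b * a * b⁻¹ ∧ a * b = β.add a b) ∧
    (∀ a ∈ L, ∀ b ∈ L, a * b ∈ L) ∧ (∀ a ∈ L, a⁻¹ ∈ L) ∧
    (∀ a₁ ∈ I, ∀ a₂ ∈ I, ∀ b₁ ∈ L, ∀ b₂ ∈ L, a₁ * b₁ = a₂ * b₂ → a₁ = a₂ ∧ b₁ = b₂) ∧
    ∀ a₁ ∈ I, ∀ a₂ ∈ I, ∀ b₁ ∈ L, ∀ b₂ ∈ L,
      β.add (a₁ * b₁) (a₂ * b₂) = (β.add a₁ a₂) * (β.add b₁ b₂) := by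
  classical
  obtain ⟨hI1, hImul, hIinv, hIconj, hIlam⟩ := hI
  obtain ⟨⟨hL1, hLadd, hLneg⟩, hLlam⟩ := hL
  letI : AddCommGroup B := β.toAdd
  have hadd : ∀ a b : B, β.add a b = a + b := fun _ _ => rfl
  have hneg : ∀ a : B, β.neg a = -a := fun _ => rfl
  have hzero : (1 : B) = 0 := rfl
  have hlam : ∀ a b : B, β.lam a b = -a + a * b := fun _ _ => rfl
  have hcap : ∀ x : B, x ∈ I → x ∈ L → x = 1 := by
    intro x hx hl
    have := (Set.ext_iff.mp hIL x).mp ⟨hx, hl⟩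
    simpa using this
  -- basic brace identities
  have hc : ∀ a b c : B, a * (b + c) = a * b + a * c - a := by
    intro a b c
    have h := β.compat a b c
    rw [hadd, hadd, hadd] at h
    rw [eq_sub_iff_add_eq]; exact h
  have hmuladd : ∀ a b : B, a * b = a + β.lam a b := by
    intro a b; rw [hlam]; abel
  have hmul_zero : ∀ a : B, a * (0 : B) = a := by
    intro a; rw [← hzero, mul_one]
  have hmul_neg : ∀ a b : B, a * (-b) = a + a - a * b := by
    intro a b
    have h := hc a b (-b)
    rw [add_neg_cancel, hmul_zero] at h
    have h' : a * b + a * (-b) = a + a := sub_eq_iff_eq_add.mp h.symm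
    exact eq_sub_iff_add_eq.mpr ((add_comm _ _).trans h')
  have hlam_one : ∀ c : B, β.lam 1 c = c := by
    intro c; rw [hlam, one_mul, hzero, neg_zero, zero_add]
  have hlam_mul : ∀ a b c : B, β.lam (a * b) c = β.lam a (β.lam b c) := by
    intro a b c
    simp only [hlam]
    rw [hc a (-b) (b * c), hmul_neg a b, ← mul_assoc, mul_assoc a b c, ← mul_assoc]
    abel
  -- I is an additive subgroup
  have hIneg : ∀ a ∈ I, -a ∈ I := by
    intro a ha
    have h := hIlam a a⁻¹ (hIinv a ha)
    rwa [hlam, mul_inv_cancel, hzero, add_zero] at h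
  have hIadd : ∀ a ∈ I, ∀ b ∈ I, a + b ∈ I := by
    intro a ha b hb
    have he : a + b = a * β.lam a⁻¹ b := by
      rw [hmuladd a (β.lam a⁻¹ b), ← hlam_mul, mul_inv_cancel, hlam_one]
    rw [he]
    exact hImul a ha _ (hIlam a⁻¹ b hb)
  -- the key fixed-point lemma
  have hfix : ∀ a ∈ I, ∀ b ∈ L, β.lam a b = b := by
    intro a ha b hb
    have hi : b⁻¹ * a * b ∈ I := by
      have := hIconj b⁻¹ a ha; rwa [inv_inv] at this
    have hmemI : β.lam a b - b ∈ I := by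
      have e : β.lam a b - b = -a + β.lam b (b⁻¹ * a * b) := by
        simp only [hlam]
        rw [show b * (b⁻¹ * a * b) = a * b by group]
        abel
      rw [e]
      exact hIadd _ (hIneg a ha) _ (hIlam b _ hi)
    have hmemL : β.lam a b - b ∈ L := by
      rw [sub_eq_add_neg]
      exact hLadd _ (hLlam a b hb) _ (hLneg b hb)
    have h1 := hcap _ hmemI hmemL
    rw [hzero, sub_eq_zero] at h1
    exact h1
  have hmul_eq_add : ∀ a ∈ I, ∀ b ∈ L, a * b = a + b := by
    intro a ha b hb
    rw [hmuladd, hfix a ha b hb]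
  have hconj : ∀ a ∈ I, ∀ b ∈ L, β.lam b a = b * a * b⁻¹ := by
    intro a ha b hb
    have ha' : b * a * b⁻¹ ∈ I := hIconj b a ha
    have e : b * a = (b * a * b⁻¹) * b := by group
    rw [hlam]
    conv_lhs => rw [e, hmul_eq_add _ ha' b hb]
    abel
  have hLmul : ∀ a ∈ L, ∀ b ∈ L, a * b ∈ L := by
    intro a ha b hb
    rw [hmuladd]
    exact hLadd a ha _ (hLlam a b hb)
  have hLinv : ∀ a ∈ L, a⁻¹ ∈ L := by
    intro a ha
    have e : a⁻¹ = β.lam a⁻¹ (-a) := by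
      rw [hlam, hmul_neg, inv_mul_cancel, hzero]
      abel
    rw [e]
    exact hLlam a⁻¹ (-a) (hLneg a ha)
  refine ⟨fun a ha b hb => ⟨hfix a ha b hb, hconj a ha b hb,
      (hmul_eq_add a ha b hb).trans (hadd a b).symm⟩, hLmul, hLinv, ?_, ?_⟩
  · intro a₁ ha₁ a₂ ha₂ b₁ hb₁ b₂ hb₂ h
    have key : a₂⁻¹ * a₁ = b₂ * b₁⁻¹ := by
      rw [inv_mul_eq_iff_eq_mul, ← mul_assoc, ← h, mul_inv_cancel_right]
    have hxI : a₂⁻¹ * a₁ ∈ I := hImul _ (hIinv a₂ ha₂) _ ha₁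
    have hxL : a₂⁻¹ * a₁ ∈ L := key ▸ hLmul b₂ hb₂ _ (hLinv b₁ hb₁)
    have h1 := hcap _ hxI hxL
    have h2 : b₂ * b₁⁻¹ = 1 := key ▸ h1
    exact ⟨(inv_mul_eq_one.mp h1).symm, (mul_inv_eq_one.mp h2).symm⟩
  · intro a₁ ha₁ a₂ ha₂ b₁ hb₁ b₂ hb₂
    simp only [hadd]
    have hbL : b₁ + b₂ ∈ L := hLadd b₁ hb₁ b₂ hb₂
    rw [hmul_eq_add a₁ ha₁ b₁ hb₁, hmul_eq_add a₂ ha₂ b₂ hb₂,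
      hmul_eq_add _ (hIadd a₁ ha₁ a₂ ha₂) _ hbL]
    abel
end

section
/- Let (X, r) be a simple involutive non-degenerate set-theoretic solution of the Yang–Baxter equation. If |X| > 2, then (X, r) is indecomposable; and if |X| is not a prime number, then (X, r) is irretractable. -/
open Equiv Pointwise

universe u v

/-!
Both parts compare `X` with two of its epimorphic images. The orbit map onto `X / 𝒢(X,r)`,
carrying the trivial solution, is an epimorphism. If it were injective, all `σ_x` would be the
identity, and then every surjection onto a two-element set would be an epimorphism, which is
impossible when `|X| > 2`; so there is a single orbit.

The retraction `X → Ret(X,r)` is an epimorphism as well. If it is not injective then all `σ_x`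
equal one permutation `σ`, which is an `n`-cycle, `n = |X|`, by indecomposability. Identifying
`X` with `ℤ/n` so that `σ` becomes `k ↦ k + 1`, reduction modulo a prime `p ∣ n` is an
epimorphism onto the cyclic permutation solution on `ℤ/p`, so `p = n`.
-/

theorem Equiv.Perm.map_rel_of_map_rel_inv {α : Type*} [Finite α] {r : α → α → Prop}
    (g : Equiv.Perm α) (h : ∀ a b, r a b → r (g⁻¹ a) (g⁻¹ b)) {a b : α} (hab : r a b) :
    r (g a) (g b) := by
  obtain ⟨n, hn⟩ : g ∈ Submonoid.powers g⁻¹ :=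
    mem_powers_iff_mem_zpowers.mpr (inv_inv g ▸ inv_mem (Subgroup.mem_zpowers g⁻¹))
  suffices ∀ n : ℕ, r ((g⁻¹ ^ n) a) ((g⁻¹ ^ n) b) from hn ▸ this n
  intro n
  induction n with
  | zero => exact hab
  | succ n ih => simpa only [pow_succ', Equiv.Perm.mul_apply] using h _ _ ih

theorem exists_zmod_equiv_of_forall_mem_orbit {X : Type*} (σ : Equiv.Perm X) (x : X)
    (h : ∀ z, z ∈ MulAction.orbit (Subgroup.zpowers σ) x) :
    ∃ (m : ℕ) (e : ZMod m ≃ X), ∀ k, e (k + 1) = σ (e k) := by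
  let e := (MulAction.orbitZPowersEquiv σ x).symm.trans (Equiv.subtypeUnivEquiv h)
  refine ⟨_, e, fun k => ?_⟩
  have hk : k + 1 = ((1 + ZMod.cast k : ℤ) : ZMod _) := by simp [add_comm]
  simp only [e, Equiv.trans_apply, Equiv.subtypeUnivEquiv_apply]
  rw [hk, MulAction.orbitZPowersEquiv_symm_apply', MulAction.orbitZPowersEquiv_symm_apply]
  simp [zpow_one_add, mul_smul]

namespace YBE

variable {X : Type u}

def ofPerm {Z : Type v} (τ : Equiv.Perm Z) : YBE Z := ⟨fun _ => τ, fun _ _ => rfl⟩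

theorem IsSimple.injective_or_subsingleton {S : YBE X} (hs : S.IsSimple) {Z : Type u}
    {T : YBE Z} {f : X → Z} (hf : S.IsHom T f) (hsurj : Function.Surjective f) :
    Function.Injective f ∨ Subsingleton Z :=
  (hs.2 Z T f hf hsurj).imp (·.1) fun h => (Nat.card_eq_one_iff_unique.mp h).1

theorem IsSimple.card_eq_or_card_eq_one {S : YBE X} (hs : S.IsSimple) {Z : Type u}
    {T : YBE Z} {f : X → Z} (hf : S.IsHom T f) (hsurj : Function.Surjective f) :
    Nat.card Z = Nat.card X ∨ Nat.card Z = 1 :=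
  (hs.2 Z T f hf hsurj).imp_left fun h => (Nat.card_congr (Equiv.ofBijective f h)).symm

theorem sigma_inv_apply_eq_of_sigma_eq (S : YBE X) {a b : X} (h : S.σ a = S.σ b) (m : X) :
    S.σ ((S.σ m)⁻¹ a) = S.σ ((S.σ m)⁻¹ b) :=
  mul_left_cancel <| (S.ybe a m).symm.trans <| by rw [h]; exact S.ybe b m

theorem sigma_apply_eq_sigma_apply_iff [Finite X] (S : YBE X) (m a b : X) :
    S.σ (S.σ m a) = S.σ (S.σ m b) ↔ S.σ a = S.σ b :=
  ⟨fun h => by simpa using S.sigma_inv_apply_eq_of_sigma_eq h m,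
    (S.σ m).map_rel_of_map_rel_inv (r := fun a b => S.σ a = S.σ b)
      fun _ _ h => S.sigma_inv_apply_eq_of_sigma_eq h m⟩

def retract (S : YBE X) [Finite X] : YBE (Quotient (Setoid.ker S.σ)) where
  σ := Quotient.lift
    (fun m => Quotient.congr (S.σ m) fun a b => (S.sigma_apply_eq_sigma_apply_iff m a b).symm)
    fun m m' (h : S.σ m = S.σ m') => by ext ⟨z⟩; simp [h]
  ybe := by
    rintro ⟨x⟩ ⟨y⟩
    ext ⟨z⟩
    exact congrArg (fun g : Equiv.Perm X => Quotient.mk _ (g z)) (S.ybe x y)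

theorem isHom_retract_mk [Finite X] (S : YBE X) :
    S.IsHom S.retract (Quotient.mk (Setoid.ker S.σ)) := fun _ _ => rfl

theorem not_isSimple_of_sigma_eq_one {S : YBE X} (hσ : ∀ a, S.σ a = 1) (hX : 2 < Nat.card X) :
    ¬ S.IsSimple := by
  classical
  intro hs
  have : Finite X := Nat.finite_of_card_ne_zero (by omega)
  have : Nontrivial X := Finite.one_lt_card_iff_nontrivial.mp (by omega)
  obtain ⟨a, b, hab⟩ := exists_pair_ne X
  let f : X → ULift.{u} Bool := fun z => ⟨decide (z = a)⟩
  have hf : S.IsHom (ofPerm 1) f := fun _ z => by simp [hσ, ofPerm]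
  have hsurj : Function.Surjective f := by
    rintro ⟨_ | _⟩
    · exact ⟨b, by simp [f, hab.symm]⟩
    · exact ⟨a, by simp [f]⟩
  have h2 : Nat.card (ULift.{u} Bool) = 2 := by simp
  have := hs.card_eq_or_card_eq_one hf hsurj
  omega

theorem indecomposable_of_isSimple {S : YBE X} (hs : S.IsSimple) (hX : 2 < Nat.card X) :
    S.Indecomposable := by
  have hq : S.IsHom (ofPerm 1) (Quotient.mk (MulAction.orbitRel S.permGroup X)) :=
    fun a b => Quotient.sound ⟨S.σg a, rfl⟩
  rcases hs.injective_or_subsingleton hq Quotient.mk_surjective with hinj | hsub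
  · exact absurd hs (not_isSimple_of_sigma_eq_one (fun a => Equiv.ext fun b => hinj (hq a b)) hX)
  · intro x y
    obtain ⟨g, hg⟩ := Quotient.exact <|
      Subsingleton.elim (Quotient.mk (MulAction.orbitRel S.permGroup X) y) (Quotient.mk _ x)
    exact ⟨g, g.2, hg⟩

theorem permGroup_eq_zpowers [Nonempty X] {S : YBE X} {τ : Equiv.Perm X} (h : ∀ a, S.σ a = τ) :
    S.permGroup = Subgroup.zpowers τ := by
  rw [permGroup, Subgroup.zpowers_eq_closure, funext h, Set.range_const]

theorem IsSimple.card_prime_of_zmod_equiv {S : YBE X} (hs : S.IsSimple) {m : ℕ}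
    (e : ZMod m ≃ X) (he : ∀ a k, S.σ a (e k) = e (k + 1)) : (Nat.card X).Prime := by
  have hm : Nat.card X = m := by rw [← Nat.card_congr e, Nat.card_zmod]
  have hp : m.minFac.Prime := Nat.minFac_prime (by have := hs.1; omega)
  let f : X → ULift.{u} (ZMod m.minFac) :=
    fun z => ⟨ZMod.castHom (Nat.minFac_dvd m) _ (e.symm z)⟩
  have hf : S.IsHom (ofPerm (Equiv.ulift.symm.permCongr (Equiv.addRight 1))) f := by
    intro a z
    obtain ⟨k, rfl⟩ := e.surjective z
    simp [f, ofPerm, he, ZMod.cast_add (Nat.minFac_dvd m), ZMod.cast_one (Nat.minFac_dvd m)]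
  have hsurj : Function.Surjective f := fun ⟨c⟩ => by
    obtain ⟨k, rfl⟩ := ZMod.castHom_surjective (Nat.minFac_dvd m) c
    exact ⟨e k, by simp [f]⟩
  have hcard : Nat.card (ULift.{u} (ZMod m.minFac)) = m.minFac := by simp
  rcases hs.card_eq_or_card_eq_one hf hsurj with h | h
  · rwa [← h, hcard]
  · exact absurd (hcard ▸ h) hp.ne_one

theorem sigma_injective_of_isSimple {S : YBE X} (hs : S.IsSimple) (hn : ¬ (Nat.card X).Prime) :
    Function.Injective S.σ := by
  have : Finite X := Nat.finite_of_card_ne_zero (by have := hs.1; omega)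
  rcases hs.injective_or_subsingleton S.isHom_retract_mk Quotient.mk_surjective with hinj | hsub
  · exact fun a b h => hinj (Quotient.sound h)
  have : Nonempty X := (Nat.card_pos_iff.mp (by have := hs.1; omega)).1
  let x := Classical.arbitrary X
  have hσ : ∀ a, S.σ a = S.σ x := fun a =>
    Quotient.exact (Subsingleton.elim (Quotient.mk (Setoid.ker S.σ) a) (Quotient.mk _ x))
  have hX : 2 < Nat.card X := by
    have := hs.1
    have : Nat.card X ≠ 2 := fun h => hn (h ▸ Nat.prime_two)
    omega
  have horbit : ∀ z, z ∈ MulAction.orbit (Subgroup.zpowers (S.σ x)) x := fun z => by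
    obtain ⟨g, hg, rfl⟩ := indecomposable_of_isSimple hs hX x z
    exact ⟨⟨g, permGroup_eq_zpowers hσ ▸ hg⟩, rfl⟩
  obtain ⟨m, e, he⟩ := exists_zmod_equiv_of_forall_mem_orbit _ x horbit
  exact absurd (hs.card_prime_of_zmod_equiv e fun a k => by rw [hσ, he]) hn

end YBE

/-- A simple solution is indecomposable whenever `|X| > 2`, and
irretractable whenever `|X|` is not prime. -/
theorem statement19 {X : Type u} (S : YBE X) (hs : S.IsSimple) :
    (2 < Nat.card X → S.Indecomposable) ∧
    (¬ (Nat.card X).Prime → ∀ x y : X, x ≠ y → S.σ x ≠ S.σ y) :=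
  ⟨S.indecomposable_of_isSimple hs,
    fun hn _ _ hxy h => hxy (S.sigma_injective_of_isSimple hs hn h)⟩
end
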